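/- arXiv:1907.06008 — 7 statements merged into one kernel-verified Lean document; each statement's English description precedes it below -/
import Mathlib

section
/- Let Γ be a finite simple graph of order n and let 1 ≤ k ≤ n−1. Then the map θ ↦ f_θ, where f_θ(A) = {θ(a) : a ∈ A}, is an injective group homomorphism from Aut(Γ) to Aut(F_k(Γ)); in particular, Aut(Γ) is isomorphic to a subgroup of Aut(F_k(Γ)). -/
open scoped symmDiff

/-- The `k`-token graph of a simple graph `G`: vertices are the `k`-element subsets of the
vertex set, two such subsets being adjacent iff their symmetric difference is an edge of `G`. -/
def tokenGraph {V : Type*} [DecidableEq V] (G : SimpleGraph V) (k : ℕ) :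
    SimpleGraph {s : Finset V // s.card = k} where
  Adj A B := ∃ a b, G.Adj a b ∧ A.val ∆ B.val = {a, b}
  symm := by
    constructor
    rintro A B ⟨a, b, hab, h⟩
    exact ⟨a, b, hab, by rwa [symmDiff_comm]⟩
  loopless := by
    constructor
    rintro A ⟨a, b, hab, h⟩
    rw [symmDiff_self] at h
    have ha : a ∈ ({a, b} : Finset V) := Finset.mem_insert_self a {b}
    rw [← h] at ha
    simp at ha

section aux
variable {V : Type*} [DecidableEq V] {G : SimpleGraph V} {k : ℕ}

def mapSet (θ : G ≃g G) (A : {s : Finset V // s.card = k}) : {s : Finset V // s.card = k} :=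
  ⟨A.val.image θ, by rw [Finset.card_image_of_injective _ θ.injective, A.2]⟩

lemma mapSet_mapSet (θ₁ θ₂ : G ≃g G) (A : {s : Finset V // s.card = k}) :
    mapSet θ₁ (mapSet θ₂ A) = mapSet (θ₂.trans θ₁) A := by
  apply Subtype.ext
  simp [mapSet, Finset.image_image]

lemma mapSet_symm (θ : G ≃g G) (A : {s : Finset V // s.card = k}) :
    mapSet θ.symm (mapSet θ A) = A := by
  apply Subtype.ext
  show (A.val.image θ).image θ.symm = A.val
  rw [Finset.image_image]
  have : (⇑θ.symm ∘ ⇑θ) = id := by ext x; exact θ.symm_apply_apply x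
  rw [this, Finset.image_id]

lemma adj_mapSet (θ : G ≃g G) {A B : {s : Finset V // s.card = k}}
    (h : (tokenGraph G k).Adj A B) :
    (tokenGraph G k).Adj (mapSet θ A) (mapSet θ B) := by
  obtain ⟨a, b, hab, h⟩ := h
  refine ⟨θ a, θ b, θ.map_rel_iff.mpr hab, ?_⟩
  rw [mapSet, mapSet]
  show (A.val.image θ) ∆ (B.val.image θ) = _
  rw [← Finset.image_symmDiff _ _ θ.injective, h]
  simp

def mapIso (θ : G ≃g G) : tokenGraph G k ≃g tokenGraph G k where
  toFun := mapSet θ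
  invFun := mapSet θ.symm
  left_inv := mapSet_symm θ
  right_inv := fun A => by
    have := mapSet_symm (k := k) θ.symm A
    simpa using this
  map_rel_iff' := by
    intro A B
    constructor
    · intro h
      have := adj_mapSet θ.symm (show (tokenGraph G k).Adj (mapSet θ A) (mapSet θ B) from h)
      rwa [mapSet_symm, mapSet_symm] at this
    · exact adj_mapSet θ

end aux

/-- The map `θ ↦ f_θ`, where `f_θ(A) = θ '' A`, is an injective group homomorphism from
`Aut(Γ)` to `Aut(F_k(Γ))`; in particular `Aut(Γ)` is isomorphic to a subgroup of
`Aut(F_k(Γ))`. -/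
theorem stmt_0 {V : Type*} [Fintype V] [DecidableEq V] (G : SimpleGraph V) (n k : ℕ)
    (hn : Fintype.card V = n) (hk1 : 1 ≤ k) (hk2 : k ≤ n - 1) :
    ∃ φ : (G ≃g G) →* (tokenGraph G k ≃g tokenGraph G k),
      Function.Injective φ ∧
      ∀ (θ : G ≃g G) (A : {s : Finset V // s.card = k}),
        ((φ θ) A).val = A.val.image θ := by
  have hmul : ∀ θ₁ θ₂ : G ≃g G,
      (mapIso (θ₁ * θ₂) : tokenGraph G k ≃g tokenGraph G k) = mapIso θ₁ * mapIso θ₂ := by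
    intro θ₁ θ₂
    apply RelIso.ext
    intro A
    show mapSet (θ₁ * θ₂) A = mapSet θ₁ (mapSet θ₂ A)
    rw [mapSet_mapSet]
    rfl
  refine ⟨MonoidHom.mk' mapIso hmul, ?_, fun θ A => rfl⟩
  rw [injective_iff_map_eq_one]
  intro θ hθ
  have hfix : ∀ A : {s : Finset V // s.card = k}, mapSet θ A = A := by
    intro A
    exact congrFun (congrArg (fun (f : tokenGraph G k ≃g tokenGraph G k) => f.toFun) hθ) A
  apply RelIso.ext
  intro v
  show θ v = v
  by_contra hne
  have hcard : k ≤ (Finset.univ.erase (θ v)).card := by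
    rw [Finset.card_erase_of_mem (Finset.mem_univ _), Finset.card_univ, hn]
    exact hk2
  obtain ⟨A, hvA, hAsub, hAcard⟩ := Finset.exists_subsuperset_card_eq
    (s := {v}) (t := Finset.univ.erase (θ v))
    (by simp [Finset.mem_erase, Ne.symm hne]) (by simpa using hk1) hcard
  have hθvA : θ v ∈ A := by
    have := hfix ⟨A, hAcard⟩
    have h2 : A.image θ = A := congrArg Subtype.val this
    have h3 : θ v ∈ A.image θ := Finset.mem_image_of_mem θ (hvA (Finset.mem_singleton_self v))
    rwa [h2] at h3
  exact (Finset.mem_erase.mp (hAsub hθvA)).1 rfl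
end

section
/- Let Γ be a finite simple graph of even order n ≥ 4. Then the map f_c on the vertices of F_{n/2}(Γ) defined by f_c(A) = V(Γ) \ A is an automorphism of F_{n/2}(Γ), and f_c is not equal to the induced automorphism f_θ for any automorphism θ of Γ. -/
open scoped symmDiff

/-- For a graph `Γ` of even order `n ≥ 4`, the complementation map `A ↦ V(Γ) \ A` is an
automorphism of `F_{n/2}(Γ)` which is not the automorphism induced by any automorphism
`θ` of `Γ` (the induced automorphism being `f_θ(A) = θ '' A`). -/
theorem stmt_1 {V : Type*} [Fintype V] [DecidableEq V] (G : SimpleGraph V) (n : ℕ)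
    (hn : Fintype.card V = n) (hn4 : 4 ≤ n) (heven : Even n) :
    ∃ φ : tokenGraph G (n / 2) ≃g tokenGraph G (n / 2),
      (∀ A, (φ A).val = A.valᶜ) ∧
      ∀ θ : G ≃g G, ∃ A : {s : Finset V // s.card = n / 2},
        (φ A).val ≠ A.val.image θ := by
  have hhalf : ∀ A : {s : Finset V // s.card = n / 2}, (A.val)ᶜ.card = n / 2 := by
    rintro ⟨A, hA⟩
    obtain ⟨m, hm⟩ := heven
    rw [Finset.card_compl, hA, hn]
    omega
  let e : {s : Finset V // s.card = n / 2} ≃ {s : Finset V // s.card = n / 2} :=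
    { toFun := fun A => ⟨A.valᶜ, hhalf A⟩
      invFun := fun A => ⟨A.valᶜ, hhalf A⟩
      left_inv := fun A => by simp
      right_inv := fun A => by simp }
  have hadj : ∀ A B : {s : Finset V // s.card = n / 2},
      (tokenGraph G (n / 2)).Adj (e A) (e B) ↔ (tokenGraph G (n / 2)).Adj A B := by
    intro A B
    simp only [tokenGraph, e, Equiv.coe_fn_mk, compl_symmDiff_compl]
  refine ⟨⟨e, fun {A B} => hadj A B⟩, fun A => rfl, ?_⟩
  intro θ
  by_contra h
  push_neg at h
  -- pick a vertex v; build A of card n/2 containing v and θ v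
  have hV : 0 < Fintype.card V := by omega
  obtain ⟨v⟩ := Fintype.card_pos_iff.mp hV
  have hcard : ({v, θ v} : Finset V).card ≤ n / 2 := by
    have := Finset.card_insert_le v ({θ v} : Finset V)
    simp only [Finset.card_singleton] at this
    omega
  obtain ⟨A, hsub, hA⟩ := Finset.exists_superset_card_eq hcard (by omega)
  have := h ⟨A, hA⟩
  simp only [RelIso.coe_fn_mk, Equiv.coe_fn_mk, e] at this
  have hv : v ∈ A := hsub (by simp)
  have hθv : θ v ∈ A := hsub (by simp)
  have : θ v ∈ Aᶜ := by
    rw [this]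
    exact Finset.mem_image_of_mem _ hv
  simp [hθv] at this
end

section
/- Let n ≥ 4 be an even integer and let Γ be a finite simple graph of order n. Then the order of Aut(F_{n/2}(Γ)) is at least twice the order of Aut(Γ), i.e., |Aut(F_{n/2}(Γ))| ≥ 2·|Aut(Γ)|. -/
open scoped symmDiff

section Aux

variable {V : Type*} [Fintype V] [DecidableEq V] (G : SimpleGraph V) (k : ℕ)

omit [Fintype V] in
lemma tokenGraph_adj (A B : {s : Finset V // s.card = k}) :
    (tokenGraph G k).Adj A B ↔ ∃ a b, G.Adj a b ∧ A.val ∆ B.val = {a, b} := Iff.rfl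

omit [Fintype V] in
private lemma finsetMapSymmDiff (f : V ≃ V) (A B : Finset V) :
    (A.map f.toEmbedding) ∆ (B.map f.toEmbedding) = (A ∆ B).map f.toEmbedding := by
  ext x; simp [Finset.mem_symmDiff]

omit [Fintype V] in
private lemma tokenAdj_map (φ : G ≃g G) {A B : Finset V}
    (h : ∃ a b, G.Adj a b ∧ A ∆ B = {a, b}) :
    ∃ a b, G.Adj a b ∧
      (A.map φ.toEquiv.toEmbedding) ∆ (B.map φ.toEquiv.toEmbedding) = {a, b} := by
  obtain ⟨a, b, hab, h⟩ := h
  refine ⟨φ a, φ b, φ.map_rel_iff.mpr hab, ?_⟩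
  rw [finsetMapSymmDiff, h]
  simp

/-- The automorphism of the token graph induced by an automorphism of `G`. -/
def tokenMapIso (φ : G ≃g G) : tokenGraph G k ≃g tokenGraph G k where
  toEquiv := φ.toEquiv.finsetCongr.subtypeEquiv (fun s => by simp)
  map_rel_iff' := by
    intro A B
    simp only [tokenGraph_adj, Equiv.subtypeEquiv_apply, Equiv.finsetCongr_apply]
    constructor
    · rintro h
      obtain ⟨a, b, hab, h'⟩ := tokenAdj_map G φ.symm h
      refine ⟨a, b, hab, ?_⟩
      rw [← h']
      congr 1 <;> · rw [Finset.map_map]; ext z; simp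
    · exact tokenAdj_map G φ

lemma tokenMapIso_apply (φ : G ≃g G) (S : {s : Finset V // s.card = k}) :
    ((tokenMapIso G k φ) S).val = S.val.map φ.toEquiv.toEmbedding := rfl

/-- The complementation automorphism of the token graph when `card V = 2 * k`. -/
def tokenComplIso (hk : Fintype.card V = 2 * k) : tokenGraph G k ≃g tokenGraph G k where
  toEquiv :=
    { toFun := fun A => ⟨A.valᶜ, by rw [Finset.card_compl, A.prop, hk]; omega⟩
      invFun := fun A => ⟨A.valᶜ, by rw [Finset.card_compl, A.prop, hk]; omega⟩
      left_inv := fun A => Subtype.ext (by simp)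
      right_inv := fun A => Subtype.ext (by simp) }
  map_rel_iff' := by
    intro A B
    simp only [tokenGraph_adj, Equiv.coe_fn_mk, compl_symmDiff_compl]

lemma tokenComplIso_apply (hk : Fintype.card V = 2 * k) (S : {s : Finset V // s.card = k}) :
    ((tokenComplIso G k hk) S).val = S.valᶜ := rfl

variable {k}

private lemma key1 (hk1 : 1 ≤ k) (hkn : k < Fintype.card V) (x y : V)
    (h : ∀ S : Finset V, S.card = k → x ∈ S → y ∈ S) : y = x := by
  by_contra hne
  obtain ⟨u, hxu, hut, hu⟩ := Finset.exists_subsuperset_card_eq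
    (s := {x}) (t := Finset.univ.erase y)
    (by simp [Finset.mem_erase]; exact fun h' => hne h'.symm)
    (by simpa using hk1)
    (by rw [Finset.card_erase_of_mem (Finset.mem_univ y), Finset.card_univ]; omega)
  have := h u hu (hxu (by simp))
  exact (Finset.mem_erase.mp (hut this)).1 rfl

private lemma key2 (hk2 : 2 ≤ k) (hkn : k ≤ Fintype.card V) (x y : V)
    (h : ∀ S : Finset V, S.card = k → x ∈ S → y ∉ S) : False := by
  obtain ⟨u, hxu, _, hu⟩ := Finset.exists_subsuperset_card_eq
    (s := {x, y}) (t := Finset.univ) (Finset.subset_univ _)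
    ((Finset.card_insert_le _ _).trans (by simpa using hk2))
    (by rw [Finset.card_univ]; omega)
  exact h u hu (hxu (by simp)) (hxu (by simp))

private lemma eq_of_maps_eq (hk1 : 1 ≤ k) (hkn : k < Fintype.card V) (e₁ e₂ : V ≃ V)
    (h : ∀ S : Finset V, S.card = k → S.map e₁.toEmbedding = S.map e₂.toEmbedding) :
    e₁ = e₂ := by
  ext x
  have hy : e₂.symm (e₁ x) = x := by
    refine key1 hk1 hkn x _ (fun S hS hx => ?_)
    have : e₁ x ∈ S.map e₁.toEmbedding := Finset.mem_map_equiv.mpr (by simpa using hx)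
    rw [h S hS] at this
    exact Finset.mem_map_equiv.mp this
  have := congrArg e₂ hy
  simpa using this

private lemma no_compl (hk2 : 2 ≤ k) (hkn : k ≤ Fintype.card V) (e₁ e₂ : V ≃ V)
    (h : ∀ S : Finset V, S.card = k → S.map e₁.toEmbedding = (S.map e₂.toEmbedding)ᶜ) :
    False := by
  have hne : Nonempty V := by rw [← Fintype.card_pos_iff]; omega
  obtain ⟨x⟩ := hne
  refine key2 hk2 hkn x (e₂.symm (e₁ x)) (fun S hS hx hy => ?_)
  have h1 : e₁ x ∈ S.map e₁.toEmbedding := Finset.mem_map_equiv.mpr (by simpa using hx)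
  rw [h S hS] at h1
  exact (Finset.mem_compl.mp h1) (Finset.mem_map_equiv.mpr (by simpa using hy))

end Aux

/-- For a graph `Γ` of even order `n ≥ 4`, `|Aut(F_{n/2}(Γ))| ≥ 2 |Aut(Γ)|`. -/
theorem stmt_2 {V : Type*} [Fintype V] [DecidableEq V] (G : SimpleGraph V) (n : ℕ)
    (hn : Fintype.card V = n) (hn4 : 4 ≤ n) (heven : Even n) :
    2 * Nat.card (G ≃g G) ≤
      Nat.card (tokenGraph G (n / 2) ≃g tokenGraph G (n / 2)) := by
  set k := n / 2 with hkdef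
  have hk2 : 2 ≤ k := by omega
  have h2k : Fintype.card V = 2 * k := by
    obtain ⟨m, hm⟩ := heven; omega
  have hklt : k < Fintype.card V := by omega
  have hkle : k ≤ Fintype.card V := by omega
  haveI : Finite (tokenGraph G k ≃g tokenGraph G k) :=
    Finite.of_injective _ RelIso.toEquiv_injective
  set c : tokenGraph G k ≃g tokenGraph G k := tokenComplIso G k h2k with hc
  set F : Bool × (G ≃g G) → (tokenGraph G k ≃g tokenGraph G k) :=
    fun p => if p.1 then (tokenMapIso G k p.2).trans c else tokenMapIso G k p.2 with hF
  have hvalT : ∀ (φ : G ≃g G) (S : {s : Finset V // s.card = k}),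
      ((F (true, φ)) S).val = (S.val.map φ.toEquiv.toEmbedding)ᶜ := by
    intro φ S
    show ((tokenMapIso G k φ).trans c S).val = _
    rw [RelIso.trans_apply, hc, tokenComplIso_apply, tokenMapIso_apply]
  have hvalF : ∀ (φ : G ≃g G) (S : {s : Finset V // s.card = k}),
      ((F (false, φ)) S).val = S.val.map φ.toEquiv.toEmbedding := by
    intro φ S
    show ((tokenMapIso G k φ) S).val = _
    rw [tokenMapIso_apply]
  have hinj : Function.Injective F := by
    rintro ⟨b₁, φ⟩ ⟨b₂, ψ⟩ heq
    have heqS : ∀ S : Finset V, (hS : S.card = k) →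
        ((F (b₁, φ)) ⟨S, hS⟩).val = ((F (b₂, ψ)) ⟨S, hS⟩).val := fun S hS => by rw [heq]
    have heqv : φ.toEquiv = ψ.toEquiv → (b₁, φ) = ((b₁ : Bool), ψ) := by
      intro h
      have : φ = ψ := RelIso.toEquiv_injective h
      rw [this]
    cases b₁ <;> cases b₂
    · exact heqv (eq_of_maps_eq (show 1 ≤ k by omega) hklt _ _
        (fun S hS => by rw [← hvalF φ ⟨S, hS⟩, ← hvalF ψ ⟨S, hS⟩]; exact heqS S hS))
    · exact absurd (fun S hS => by
        rw [← hvalF φ ⟨S, hS⟩, heqS S hS, hvalT ψ ⟨S, hS⟩])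
        (fun h => no_compl hk2 hkle φ.toEquiv ψ.toEquiv h)
    · exact absurd (fun S hS => by
        rw [← hvalF ψ ⟨S, hS⟩, ← heqS S hS, hvalT φ ⟨S, hS⟩])
        (fun h => no_compl hk2 hkle ψ.toEquiv φ.toEquiv h)
    · refine heqv (eq_of_maps_eq (by omega) hklt _ _ (fun S hS => ?_))
      have := heqS S hS
      rw [hvalT φ ⟨S, hS⟩, hvalT ψ ⟨S, hS⟩] at this
      exact compl_injective this
  calc 2 * Nat.card (G ≃g G) = Nat.card (Bool × (G ≃g G)) := by
        rw [Nat.card_prod, Nat.card_eq_fintype_card (α := Bool), Fintype.card_bool]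
    _ ≤ _ := Nat.card_le_card_of_injective F hinj
end

section
/- Let n ≥ 3 be an integer with n ≠ 4. Then every automorphism of F_2(C_n) is induced by an automorphism of C_n; that is, the group homomorphism θ ↦ f_θ from Aut(C_n) to Aut(F_2(C_n)) is an isomorphism. In particular, |Aut(F_2(C_n))| = 2n. -/
open Function

open scoped symmDiff

open SimpleGraph

section pairs
variable {α : Type*} [DecidableEq α]

lemma fpair_eq_fpair_iff {a b c d : α} :
    ({a, b} : Finset α) = {c, d} ↔ (a = c ∧ b = d) ∨ (a = d ∧ b = c) := by
  rw [← Finset.coe_inj]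
  push_cast
  exact Set.pair_eq_pair_iff

lemma fpair_symmDiff {a b c : α} (hab : a ≠ b) (hac : a ≠ c) (hbc : b ≠ c) :
    ({a, b} : Finset α) ∆ ({a, c} : Finset α) = {b, c} := by
  ext x
  simp only [Finset.mem_symmDiff, Finset.mem_insert, Finset.mem_singleton]
  constructor
  · rintro (⟨h1 | h1, h2⟩ | ⟨h1 | h1, h2⟩) <;> tauto
  · rintro (rfl | rfl)
    · exact Or.inl ⟨Or.inr rfl, by tauto⟩
    · exact Or.inr ⟨Or.inr rfl, by tauto⟩

end pairs

section tok
variable {α : Type*} [DecidableEq α] {G : SimpleGraph α}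

abbrev TV (α : Type*) [DecidableEq α] : Type _ := {s : Finset α // s.card = 2}

/-- the vertex of the token graph given by a pair -/
def pr (a b : α) (h : a ≠ b) : TV α := ⟨{a, b}, Finset.card_pair h⟩

lemma pr_comm (a b : α) (h : a ≠ b) : pr a b h = pr b a h.symm := by
  simp [pr, Finset.pair_comm]

lemma pr_inj {a b c d : α} {h1 : a ≠ b} {h2 : c ≠ d} :
    pr a b h1 = pr c d h2 ↔ (a = c ∧ b = d) ∨ (a = d ∧ b = c) := by
  simp [pr, Subtype.ext_iff, fpair_eq_fpair_iff]

lemma tv_eq_pr (A : TV α) : ∃ a b, ∃ h : a ≠ b, A = pr a b h := by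
  obtain ⟨x, y, hxy, h⟩ := Finset.card_eq_two.mp A.2
  exact ⟨x, y, hxy, Subtype.ext h⟩

theorem adj_iff_move {A B : TV α} :
    (tokenGraph G 2).Adj A B ↔ ∃ u v w, u ≠ v ∧ u ≠ w ∧ v ≠ w ∧ G.Adj v w ∧
      A.val = {u, v} ∧ B.val = {u, w} := by
  constructor
  · rintro ⟨x, y, hxy, h⟩
    obtain ⟨a, b, hab, hA⟩ := Finset.card_eq_two.mp A.2
    obtain ⟨c, d, hcd, hB⟩ := Finset.card_eq_two.mp B.2
    -- membership translation
    have hmem : ∀ z : α, (z ∈ A.val ∧ z ∉ B.val) ∨ (z ∈ B.val ∧ z ∉ A.val) ↔ (z = x ∨ z = y) := by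
      intro z
      rw [← Finset.mem_symmDiff, h]
      simp
    -- not both of a, b in B
    have hnotboth : ¬ (a ∈ B.val ∧ b ∈ B.val) := by
      rintro ⟨ha, hb⟩
      have : A.val = B.val := Finset.eq_of_subset_of_card_le
        (by rw [hA]; intro z hz; simp at hz; rcases hz with rfl | rfl <;> assumption)
        (by rw [A.2, B.2])
      have hx : x ∈ A.val ∧ x ∉ B.val ∨ x ∈ B.val ∧ x ∉ A.val := (hmem x).mpr (Or.inl rfl)
      rw [this] at hx
      tauto
    -- at least one of a, b in B
    have hone : a ∈ B.val ∨ b ∈ B.val := by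
      by_contra hno
      push_neg at hno
      obtain ⟨hna, hnb⟩ := hno
      have hca : c ∉ A.val := by
        rw [hA]; simp only [Finset.mem_insert, Finset.mem_singleton]
        rintro (rfl | rfl) <;> [exact hna (by rw [hB]; simp); exact hnb (by rw [hB]; simp)]
      have hax : a = x ∨ a = y := (hmem a).mp (Or.inl ⟨by rw [hA]; simp, hna⟩)
      have hbx : b = x ∨ b = y := (hmem b).mp (Or.inl ⟨by rw [hA]; simp, hnb⟩)
      have hcx : c = x ∨ c = y := (hmem c).mp (Or.inr ⟨by rw [hB]; simp, hca⟩)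
      have : c = a ∨ c = b := by
        rcases hax with rfl | rfl <;> rcases hbx with rfl | rfl <;>
          rcases hcx with rfl | rfl <;> tauto
      rcases this with rfl | rfl
      · exact hna (by rw [hB]; simp)
      · exact hnb (by rw [hB]; simp)
    -- key helper
    have key : ∀ a b : α, a ≠ b → A.val = {a, b} → a ∈ B.val → b ∉ B.val →
        ∃ u v w, u ≠ v ∧ u ≠ w ∧ v ≠ w ∧ G.Adj v w ∧ A.val = {u, v} ∧ B.val = {u, w} := by
      intro a b hab hA haB hbB
      -- B = {a, e} for some e ∉ A
      have : ∃ e, e ≠ a ∧ B.val = {a, e} := by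
        rw [hB] at haB; simp only [Finset.mem_insert, Finset.mem_singleton] at haB
        rcases haB with rfl | rfl
        · exact ⟨d, fun h => hcd h.symm, hB⟩
        · exact ⟨c, fun h => hcd h, by rw [hB, Finset.pair_comm]⟩
      obtain ⟨e, hea, hBe⟩ := this
      have hbe : b ≠ e := by rintro rfl; exact hbB (by rw [hBe]; simp)
      have hdiff : A.val ∆ B.val = {b, e} := by
        rw [hA, hBe]; exact fpair_symmDiff hab (Ne.symm hea) hbe
      rw [h] at hdiff
      have hbe' : G.Adj b e := by
        rcases fpair_eq_fpair_iff.mp hdiff.symm with ⟨h1, h2⟩ | ⟨h1, h2⟩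
        · rw [← h1, ← h2] at hxy; exact hxy
        · rw [← h1, ← h2] at hxy; exact hxy.symm
      exact ⟨a, b, e, hab, Ne.symm hea, hbe, hbe', hA, hBe⟩
    -- split cases
    by_cases haB : a ∈ B.val
    · have hbB : b ∉ B.val := fun hb => hnotboth ⟨haB, hb⟩
      exact key a b hab hA haB hbB
    · have hbB : b ∈ B.val := by tauto
      exact key b a (Ne.symm hab) (by rw [hA, Finset.pair_comm]) hbB haB
  · rintro ⟨u, v, w, huv, huw, hvw, hadj, hA, hB⟩
    exact ⟨v, w, hadj, by rw [hA, hB, fpair_symmDiff huv huw hvw]⟩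

end tok

section tokgen
variable {α : Type*} [DecidableEq α] {G : SimpleGraph α}

/-- the map induced on token-graph vertices by a graph automorphism -/
def tmapFun (θ : G ≃g G) (A : TV α) : TV α :=
  ⟨A.val.image θ, by rw [Finset.card_image_of_injective _ θ.injective, A.2]⟩

lemma tmapFun_adj (θ : G ≃g G) {A B : TV α} (h : (tokenGraph G 2).Adj A B) :
    (tokenGraph G 2).Adj (tmapFun θ A) (tmapFun θ B) := by
  obtain ⟨x, y, hxy, hd⟩ := h
  refine ⟨θ x, θ y, θ.map_rel_iff.mpr hxy, ?_⟩
  show (A.val.image θ) ∆ (B.val.image θ) = _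
  rw [← Finset.image_symmDiff _ _ θ.injective, hd]
  simp

lemma tmapFun_symm (θ : G ≃g G) (A : TV α) : tmapFun θ.symm (tmapFun θ A) = A := by
  apply Subtype.ext
  show (A.val.image θ).image θ.symm = A.val
  rw [Finset.image_image, show (⇑θ.symm ∘ ⇑θ : α → α) = id from funext fun a => θ.symm_apply_apply a,
    Finset.image_id]

/-- the automorphism induced on the token graph by a graph automorphism -/
def tokenIso (θ : G ≃g G) : tokenGraph G 2 ≃g tokenGraph G 2 where
  toFun := tmapFun θ
  invFun := tmapFun θ.symm
  left_inv := tmapFun_symm θ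
  right_inv := by
    intro A
    apply Subtype.ext
    show (A.val.image θ.symm).image θ = A.val
    rw [Finset.image_image, show (⇑θ ∘ ⇑θ.symm : α → α) = id from funext fun a => θ.apply_symm_apply a,
      Finset.image_id]
  map_rel_iff' := by
    intro A B
    constructor
    · intro h
      have h2 := tmapFun_adj θ.symm h
      change (tokenGraph G 2).Adj (tmapFun θ.symm (tmapFun θ A)) (tmapFun θ.symm (tmapFun θ B)) at h2
      rwa [tmapFun_symm, tmapFun_symm] at h2
    · exact tmapFun_adj θ

lemma tokenIso_apply (θ : G ≃g G) (A : TV α) : tokenIso θ A = tmapFun θ A := rfl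

/-- the homomorphism from the automorphism group of `G` to that of its token graph -/
def tokenHom : (G ≃g G) →* (tokenGraph G 2 ≃g tokenGraph G 2) where
  toFun := tokenIso
  map_one' := by
    apply RelIso.ext
    intro A
    apply Subtype.ext
    show A.val.image _ = A.val
    simp [RelIso.coe_one]
  map_mul' := by
    intro θ₁ θ₂
    apply RelIso.ext
    intro A
    apply Subtype.ext
    show A.val.image (θ₁ * θ₂) = (A.val.image θ₂).image θ₁
    rw [Finset.image_image]
    rfl

lemma tokenHom_apply_val (θ : G ≃g G) (A : TV α) : (tokenHom θ A).val = A.val.image θ := rfl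

end tokgen

open Fin.NatCast Fin.CommRing

section cyc
variable {m : ℕ}

local notation "N" => m + 3

lemma fin_coe_eq_coe {a b : ℕ} : ((a : Fin N) = (b : Fin N)) ↔ Nat.ModEq N a b := by
  rw [Fin.ext_iff, Fin.val_natCast, Fin.val_natCast]
  exact Iff.rfl

lemma modeq_iff_lt {a b : ℕ} (ha : a < N) (hb : b < N) : Nat.ModEq N a b ↔ a = b :=
  ⟨fun h => h.eq_of_lt_of_lt ha hb, fun h => h ▸ Nat.ModEq.refl a⟩

lemma not_modeq {a b : ℕ} (hab : a < b) (hb : b - a < N) (hpos : a ≠ b) : ¬ Nat.ModEq N a b := by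
  intro h
  have hd := (Nat.modEq_iff_dvd' hab.le).mp h
  have := Nat.le_of_dvd (by omega) hd
  omega

lemma modeq_add_right (a : ℕ) : Nat.ModEq N (a + N) a := by
  show (a + N) % N = a % N
  exact Nat.add_mod_right a N

lemma fin_off_inj {i : Fin N} {a b : ℕ} : i + (a : Fin N) = i + (b : Fin N) ↔ Nat.ModEq N a b := by
  rw [add_right_inj, fin_coe_eq_coe]

lemma cadj {u v : Fin N} : (cycleGraph N).Adj u v ↔ v = u + 1 ∨ u = v + 1 := by
  rw [cycleGraph_adj']
  constructor
  · rintro (h | h)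
    · right
      have : u - v = 1 := by rw [Fin.ext_iff, h]; rfl
      rw [← this]; ring
    · left
      have : v - u = 1 := by rw [Fin.ext_iff, h]; rfl
      rw [← this]; ring
  · rintro (rfl | rfl)
    · right; simp
    · left; simp

lemma cadj_off {i : Fin N} {a b : ℕ} :
    (cycleGraph N).Adj (i + (a : Fin N)) (i + (b : Fin N)) ↔
      (Nat.ModEq N b (a + 1) ∨ Nat.ModEq N a (b + 1)) := by
  rw [cadj]
  have h1 : i + (a : Fin N) + 1 = i + ((a + 1 : ℕ) : Fin N) := by push_cast; ring
  have h2 : i + (b : Fin N) + 1 = i + ((b + 1 : ℕ) : Fin N) := by push_cast; ring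
  rw [h1, h2, fin_off_inj, fin_off_inj]

/-- rotation as an automorphism of the cycle graph -/
def rotIso (a : Fin N) : cycleGraph N ≃g cycleGraph N where
  toEquiv := Equiv.addLeft a
  map_rel_iff' := by
    intro x y
    simp only [Equiv.coe_addLeft, cadj]
    constructor
    · rintro (h | h)
      · left; have := h; rw [add_assoc] at this; exact add_left_cancel this
      · right; have := h; rw [add_assoc] at this; exact add_left_cancel this
    · rintro (rfl | rfl)
      · left; ring
      · right; ring

/-- reflection as an automorphism of the cycle graph -/
def refIso (a : Fin N) : cycleGraph N ≃g cycleGraph N where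
  toEquiv := Equiv.subLeft a
  map_rel_iff' := by
    intro x y
    simp only [Equiv.subLeft_apply, cadj]
    have h1 : a - y = a - x + 1 ↔ x = y + 1 := by
      constructor
      · intro h
        have : a - y = a - (x - 1) := by rw [h]; ring
        have h4 := sub_right_injective this
        rw [h4]; ring
      · rintro rfl; ring
    have h2 : a - x = a - y + 1 ↔ y = x + 1 := by
      constructor
      · intro h
        have : a - x = a - (y - 1) := by rw [h]; ring
        have h4 := sub_right_injective this
        rw [h4]; ring
      · rintro rfl; ring
    rw [h1, h2]
    tauto

lemma rotIso_apply (a x : Fin N) : rotIso a x = a + x := rfl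
lemma refIso_apply (a x : Fin N) : refIso a x = a - x := rfl

/-- any injective "step" map is a rotation or a reflection -/
theorem step_form {σ : Fin N → Fin N} (hinj : Injective σ)
    (hstep : ∀ x, σ (x + 1) = σ x + 1 ∨ σ (x + 1) = σ x - 1) :
    (∀ x, σ x = σ 0 + x) ∨ (∀ x, σ x = σ 0 - x) := by
  have key : ∀ (ε : Fin N), σ 1 = σ 0 + ε →
      (∀ x : Fin N, σ (x+1) = σ x + ε ∨ σ (x+1) = σ x - ε) →
      ∀ k : ℕ, σ (k : Fin N) = σ 0 + ε * (k : Fin N) := by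
    intro ε h1 hstep' k
    induction k using Nat.strong_induction_on with
    | _ k ih =>
      match k with
      | 0 => simp
      | 1 => simpa using h1
      | (k+2) =>
        have e2 : ((k+2 : ℕ) : Fin N) = ((k+1 : ℕ) : Fin N) + 1 := by push_cast; ring
        have e1 : ((k+1 : ℕ) : Fin N) = ((k : ℕ) : Fin N) + 1 := by push_cast; ring
        have ihk := ih k (by omega)
        have ihk1 := ih (k+1) (by omega)
        rcases hstep' ((k+1 : ℕ) : Fin N) with h | h
        · rw [e2, h, ihk1]; push_cast; ring
        · exfalso
          rw [ihk1] at h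
          have : σ (((k+1:ℕ) : Fin N) + 1) = σ ((k : ℕ) : Fin N) := by
            rw [h, ihk]; push_cast; ring
          have h5 := hinj this
          rw [← e2, fin_coe_eq_coe] at h5
          exact not_modeq (by omega) (by omega) (by omega) h5.symm
  rcases hstep 0 with h1 | h1
  · left
    intro x
    rw [zero_add] at h1
    have := key 1 h1 (by intro x; simpa using hstep x) x.val
    rw [Fin.cast_val_eq_self] at this
    rw [this]; ring
  · right
    intro x
    rw [zero_add] at h1
    have h1' : σ 1 = σ 0 + (-1) := by rw [h1]; ring
    have hs : ∀ x : Fin N, σ (x+1) = σ x + (-1) ∨ σ (x+1) = σ x - (-1) := by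
      intro x
      rcases hstep x with h | h
      · right; rw [h]; ring
      · left; rw [h]; ring
    have := key (-1) h1' hs x.val
    rw [Fin.cast_val_eq_self] at this
    rw [this]; ring

lemma two_ne_zero_fin : (2 : Fin N) ≠ 0 := by
  have : ((2:ℕ) : Fin N) ≠ ((0:ℕ) : Fin N) := by
    rw [Ne, fin_coe_eq_coe, modeq_iff_lt (by omega) (by omega)]
    omega
  simpa using this

theorem cycle_aut_form (θ : cycleGraph N ≃g cycleGraph N) :
    (∀ x, θ x = θ 0 + x) ∨ (∀ x, θ x = θ 0 - x) := by
  apply step_form θ.injective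
  intro x
  have h := θ.map_rel_iff.mpr (show (cycleGraph N).Adj x (x+1) by rw [cadj]; left; rfl)
  rw [cadj] at h
  rcases h with h | h
  · left; exact h
  · right; rw [eq_sub_iff_add_eq, h]

/-- the automorphism group of the cycle has 2n elements -/
theorem cycle_aut_card : Nat.card (cycleGraph N ≃g cycleGraph N) = 2 * N := by
  have e : (cycleGraph N ≃g cycleGraph N) ≃ Fin N × Bool := by
    refine ⟨fun θ => (θ 0, decide (θ 1 = θ 0 + 1)), fun p => if p.2 then rotIso p.1 else refIso p.1,
      ?_, ?_⟩
    · intro θ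
      rcases cycle_aut_form θ with h | h
      · have h1 : θ 1 = θ 0 + 1 := h 1
        simp only [h1, decide_eq_true_eq]
        rw [if_pos (by simp)]
        apply RelIso.ext
        intro x
        rw [rotIso_apply, h x]
      · have h1 : θ 1 = θ 0 - 1 := h 1
        have hne : ¬ (θ 1 = θ 0 + 1) := by
          rw [h1]
          intro hc
          have : (2 : Fin N) = 0 := by
            have h2 : θ 0 + 1 - (θ 0 - 1) = 0 := by rw [← hc]; ring
            calc (2 : Fin N) = θ 0 + 1 - (θ 0 - 1) := by ring
            _ = 0 := h2
          exact two_ne_zero_fin this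
        simp only [hne, decide_eq_false_iff_not, decide_eq_true_eq]
        rw [if_neg (by simp [hne])]
        apply RelIso.ext
        intro x
        rw [refIso_apply, h x, sub_eq_sub_iff_sub_eq_sub]
        simp
    · rintro ⟨a, b⟩
      cases b
      · have hne : (a : Fin N) - 1 ≠ a + 1 := by
          intro hc
          apply two_ne_zero_fin
          calc (2 : Fin N) = (a + 1) - (a - 1) := by ring
          _ = 0 := by rw [← hc]; ring
        simp [refIso_apply, hne]
      · simp [rotIso_apply]
  rw [Nat.card_congr e]
  simp [Nat.card_eq_fintype_card, mul_comm]

end cyc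

section main
variable {m : ℕ}
local notation "N" => m + 3

lemma succ_ne (x : Fin N) : x + 1 ≠ x := by
  intro h
  have h' : x + 1 = x + 0 := by rw [h, add_zero]
  exact one_ne_zero (add_left_cancel h')

lemma pred_ne (x : Fin N) : x - 1 ≠ x := by
  intro h
  rw [sub_eq_self] at h
  exact one_ne_zero h

lemma succ_ne_pred (x : Fin N) : x + 1 ≠ x - 1 := by
  intro h
  apply two_ne_zero_fin (m := m)
  calc (2 : Fin N) = (x + 1) - (x - 1) := by ring
  _ = 0 := by rw [h]; ring

lemma adj_move {a b c : Fin N} (hab : a ≠ b) (hac : a ≠ c) (hbc : b ≠ c)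
    (hadj : (cycleGraph N).Adj b c) :
    (tokenGraph (cycleGraph N) 2).Adj (pr a b hab) (pr a c hac) :=
  adj_iff_move.mpr ⟨a, b, c, hab, hac, hbc, hadj, rfl, rfl⟩

lemma adj_elim {a b : Fin N} {hab : a ≠ b} {X : TV (Fin N)}
    (h : (tokenGraph (cycleGraph N) 2).Adj (pr a b hab) X) :
    X.val = {a, b + 1} ∨ X.val = {a, b - 1} ∨ X.val = {b, a + 1} ∨ X.val = {b, a - 1} := by
  obtain ⟨u, v, w, huv, huw, hvw, hadj, hA, hB⟩ := adj_iff_move.mp h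
  have hA' : (a = u ∧ b = v) ∨ (a = v ∧ b = u) := fpair_eq_fpair_iff.mp hA
  rw [cadj] at hadj
  rcases hA' with ⟨rfl, rfl⟩ | ⟨rfl, rfl⟩
  · rcases hadj with h' | h'
    · left; rw [hB, h']
    · right; left; rw [hB, eq_sub_of_add_eq h'.symm]
  · rcases hadj with h' | h'
    · right; right; left; rw [hB, h']
    · right; right; right; rw [hB, eq_sub_of_add_eq h'.symm]

theorem tokenHom_inj : Injective (tokenHom (G := cycleGraph N)) := by
  intro θ θ' h
  apply RelIso.ext
  intro x
  have him : ∀ A : TV (Fin N), A.val.image θ = A.val.image θ' := by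
    intro A
    have := congrArg (fun f : tokenGraph (cycleGraph N) 2 ≃g tokenGraph (cycleGraph N) 2 =>
      (f A).val) h
    simpa only [tokenHom_apply_val] using this
  have key : ∀ y : Fin N, y ≠ x → θ x = θ' x ∨ θ x = θ' y := by
    intro y hy
    have h1 := him (pr x y (Ne.symm hy))
    have hmem : θ x ∈ (pr x y (Ne.symm hy)).val.image θ := by
      apply Finset.mem_image_of_mem
      simp [pr]
    rw [h1] at hmem
    simp only [pr, Finset.mem_image, Finset.mem_insert, Finset.mem_singleton] at hmem
    obtain ⟨z, hz | hz, hz2⟩ := hmem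
    · left; rw [← hz2, hz]
    · right; rw [← hz2, hz]
  rcases key (x + 1) (succ_ne x) with h1 | h1
  · exact h1
  rcases key (x - 1) (pred_ne x) with h2 | h2
  · exact h2
  exfalso
  have := θ'.injective (h1.symm.trans h2)
  exact succ_ne_pred x this

end main

section surj
variable {m : ℕ}
local notation "N" => m + 3

lemma modeq_small {a b : ℕ} (ha : a < 2 * N) (hb : b < 2 * N) :
    Nat.ModEq N a b ↔ (a = b ∨ a + N = b ∨ b + N = a) := by
  constructor
  · intro h
    rcases le_total a b with hle | hle
    · obtain ⟨c, hc⟩ := (Nat.modEq_iff_dvd' hle).mp h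
      match c with
      | 0 => left; omega
      | 1 => right; left; omega
      | (c+2) =>
        exfalso
        have : (m+3) * (c+2) ≥ 2 * N := by nlinarith
        omega
    · obtain ⟨c, hc⟩ := (Nat.modEq_iff_dvd' hle).mp h.symm
      match c with
      | 0 => left; omega
      | 1 => right; right; omega
      | (c+2) =>
        exfalso
        have : (m+3) * (c+2) ≥ 2 * N := by nlinarith
        omega
  · rintro (rfl | h | h)
    · rfl
    · rw [← h]; exact (modeq_add_right a).symm
    · rw [← h]; exact modeq_add_right b

lemma neOff {i : Fin N} {a b : ℕ} (ha : a < 2 * N) (hb : b < 2 * N)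
    (h : ¬ (a = b ∨ a + N = b ∨ b + N = a)) : i + (a : Fin N) ≠ i + (b : Fin N) := by
  rw [Ne, fin_off_inj, modeq_small ha hb]
  exact h

lemma pairOff_eq {i : Fin N} {a b c d : ℕ} (ha : a < 2 * N) (hb : b < 2 * N)
    (hc : c < 2 * N) (hd : d < 2 * N) :
    ({i + (a : Fin N), i + (b : Fin N)} : Finset (Fin N)) = {i + (c : Fin N), i + (d : Fin N)} ↔
      (((a = c ∨ a + N = c ∨ c + N = a) ∧ (b = d ∨ b + N = d ∨ d + N = b)) ∨
       ((a = d ∨ a + N = d ∨ d + N = a) ∧ (b = c ∨ b + N = c ∨ c + N = b))) := by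
  rw [fpair_eq_fpair_iff, fin_off_inj, fin_off_inj, fin_off_inj, fin_off_inj,
    modeq_small ha hc, modeq_small hb hd, modeq_small ha hd, modeq_small hb hc]

lemma off_add_one {i : Fin N} {a : ℕ} : i + (a : Fin N) + 1 = i + ((a + 1 : ℕ) : Fin N) := by
  push_cast; ring

lemma off_sub_one {i : Fin N} {a : ℕ} :
    i + (a : Fin N) - 1 = i + ((a + (m + 2) : ℕ) : Fin N) := by
  rw [sub_eq_iff_eq_add, off_add_one]
  rw [add_right_inj, fin_coe_eq_coe]
  show a % N = (a + (m+2) + 1) % N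
  rw [show a + (m+2) + 1 = a + (m+3) from by omega, Nat.add_mod_right]

lemma off_zero {i : Fin N} : i + ((0 : ℕ) : Fin N) = i := by simp

lemma pr_congr {a b a' b' : Fin N} {h : a ≠ b} (ha : a = a') (hb : b = b') :
    pr a b h = pr a' b' (ha ▸ hb ▸ h) := by subst ha; subst hb; rfl

/-- the vertex `{i, i+1}` -/
def Pv (i : Fin N) : TV (Fin N) :=
  pr (i + ((0:ℕ) : Fin N)) (i + ((1:ℕ) : Fin N)) (neOff (by omega) (by omega) (by omega))

/-- the vertex `{i, i+2}` -/
def Qv (i : Fin N) : TV (Fin N) :=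
  pr (i + ((0:ℕ) : Fin N)) (i + ((2:ℕ) : Fin N)) (neOff (by omega) (by omega) (by omega))

lemma Pv_val (i : Fin N) : (Pv i).val = {i + ((0:ℕ) : Fin N), i + ((1:ℕ) : Fin N)} := rfl

lemma Pv_inj {i j : Fin N} (h : Pv i = Pv j) : i = j := by
  obtain ⟨e, he, rfl⟩ : ∃ e : ℕ, e < N ∧ j = i + (e : Fin N) :=
    ⟨(j - i).val, (j - i).isLt, by rw [Fin.cast_val_eq_self]; ring⟩
  rw [Pv, Pv, pr_inj] at h
  have h0 : ∀ a : ℕ, i + ((e : ℕ) : Fin N) + ((a:ℕ) : Fin N) = i + ((e + a : ℕ) : Fin N) := by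
    intro a; push_cast; ring
  rw [h0, h0, fin_off_inj, fin_off_inj, fin_off_inj, fin_off_inj,
    modeq_small (by omega) (by omega), modeq_small (by omega) (by omega),
    modeq_small (by omega) (by omega), modeq_small (by omega) (by omega)] at h
  have : e = 0 := by omega
  rw [this, off_zero]

lemma pr_val (a b : Fin N) (h : a ≠ b) : (pr a b h).val = {a, b} := rfl

lemma not_val_pair_same {X : TV (Fin N)} {c : Fin N} : X.val ≠ {c, c} := by
  intro h
  have h2 := X.2
  rw [h] at h2
  simp at h2

lemma adj_elim_off {i : Fin N} {a b : ℕ} {h : i + (a : Fin N) ≠ i + (b : Fin N)} {X : TV (Fin N)}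
    (hadj : (tokenGraph (cycleGraph N) 2).Adj (pr (i + (a : Fin N)) (i + (b : Fin N)) h) X) :
    X.val = {i + (a : Fin N), i + ((b + 1 : ℕ) : Fin N)} ∨
    X.val = {i + (a : Fin N), i + ((b + (m+2) : ℕ) : Fin N)} ∨
    X.val = {i + (b : Fin N), i + ((a + 1 : ℕ) : Fin N)} ∨
    X.val = {i + (b : Fin N), i + ((a + (m+2) : ℕ) : Fin N)} := by
  rcases adj_elim hadj with h' | h' | h' | h'
  · rw [off_add_one] at h'; exact Or.inl h'
  · rw [off_sub_one] at h'; exact Or.inr (Or.inl h')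
  · rw [off_add_one] at h'; exact Or.inr (Or.inr (Or.inl h'))
  · rw [off_sub_one] at h'; exact Or.inr (Or.inr (Or.inr h'))

lemma cadj_off' {i : Fin N} {a b : ℕ} (ha : a + 1 < 2 * N) (hb : b + 1 < 2 * N) :
    (cycleGraph N).Adj (i + (a : Fin N)) (i + (b : Fin N)) ↔
      ((b = a + 1 ∨ b + N = a + 1 ∨ (a + 1) + N = b) ∨
       (a = b + 1 ∨ a + N = b + 1 ∨ (b + 1) + N = a)) := by
  rw [cadj_off, modeq_small (by omega) ha, modeq_small (by omega) hb]

lemma adj_off {i : Fin N} {a b c : ℕ} (hab : i + (a : Fin N) ≠ i + (b : Fin N))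
    (hac : i + (a : Fin N) ≠ i + (c : Fin N)) (hbc : i + (b : Fin N) ≠ i + (c : Fin N))
    (h : (cycleGraph N).Adj (i + (b : Fin N)) (i + (c : Fin N))) :
    (tokenGraph (cycleGraph N) 2).Adj (pr (i + (a : Fin N)) (i + (b : Fin N)) hab)
      (pr (i + (a : Fin N)) (i + (c : Fin N)) hac) :=
  adj_move hab hac hbc h

lemma Pv_shift (i : Fin N) : Pv (i + 1) =
    pr (i + ((1:ℕ) : Fin N)) (i + ((2:ℕ) : Fin N)) (neOff (by omega) (by omega) (by omega)) := by
  rw [Pv, pr_congr (a' := i + ((1:ℕ) : Fin N)) (b' := i + ((2:ℕ) : Fin N))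
    (by push_cast; ring) (by push_cast; ring)]

lemma Pv_adj_Qv (i : Fin N) : (tokenGraph (cycleGraph N) 2).Adj (Pv i) (Qv i) := by
  rw [Pv, Qv]
  exact adj_off _ _ (neOff (by omega) (by omega) (by omega))
    ((cadj_off' (by omega) (by omega)).mpr (by omega))

lemma Pv_adj_Qv' (i : Fin N) : (tokenGraph (cycleGraph N) 2).Adj (Pv (i + 1)) (Qv i) := by
  rw [Pv_shift, Qv]
  rw [pr_comm, pr_comm (i + ((0:ℕ) : Fin N))]
  exact adj_off _ _ (neOff (by omega) (by omega) (by omega))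
    ((cadj_off' (by omega) (by omega)).mpr (by omega))

lemma commonPP (hm : 2 ≤ m) {i : Fin N} {X : TV (Fin N)}
    (h1 : (tokenGraph (cycleGraph N) 2).Adj (Pv i) X)
    (h2 : (tokenGraph (cycleGraph N) 2).Adj (Pv (i + 1)) X) : X = Qv i := by
  rw [Pv] at h1
  rw [Pv_shift] at h2
  have e1 : i + ((1 + (m+2) : ℕ) : Fin N) = i + ((0 : ℕ) : Fin N) := by
    rw [fin_off_inj, modeq_small (by omega) (by omega)]; omega
  have e2 : i + ((2 + (m+2) : ℕ) : Fin N) = i + ((1 : ℕ) : Fin N) := by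
    rw [fin_off_inj, modeq_small (by omega) (by omega)]; omega
  rcases adj_elim_off h1 with h' | h' | h' | h'
  · exact Subtype.ext h'
  · rw [e1] at h'
    exact absurd h' not_val_pair_same
  · -- X.val = {i+1, i+1} degenerate
    rw [show ((0 + 1 : ℕ) : Fin N) = ((1 : ℕ) : Fin N) from rfl] at h'
    exact absurd h' not_val_pair_same
  · -- X.val = {i+1, i+(m+2)} : contradict h2
    exfalso
    rcases adj_elim_off h2 with h'' | h'' | h'' | h''
    · rw [h'] at h''
      rw [pairOff_eq (by omega) (by omega) (by omega) (by omega)] at h''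
      omega
    · rw [h'] at h''
      rw [pairOff_eq (by omega) (by omega) (by omega) (by omega)] at h''
      omega
    · rw [h'] at h''
      rw [pairOff_eq (by omega) (by omega) (by omega) (by omega)] at h''
      omega
    · rw [h'] at h''
      rw [pairOff_eq (by omega) (by omega) (by omega) (by omega)] at h''
      omega

lemma rebase (i j : Fin N) : ∃ e : ℕ, e < N ∧ j = i + (e : Fin N) :=
  ⟨(j - i).val, (j - i).isLt, by rw [Fin.cast_val_eq_self]; ring⟩

lemma commonPP2 (hm : 2 ≤ m) {i j : Fin N} {X : TV (Fin N)}
    (h1 : (tokenGraph (cycleGraph N) 2).Adj (Pv i) X)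
    (h2 : (tokenGraph (cycleGraph N) 2).Adj (Pv j) X) :
    j = i ∨ j = i + 1 ∨ i = j + 1 := by
  obtain ⟨e, he, rfl⟩ := rebase i j
  rw [Pv] at h1
  rw [Pv, pr_congr (a' := i + ((e : ℕ) : Fin N)) (b' := i + ((e + 1 : ℕ) : Fin N))
    (by push_cast; ring) (by push_cast; ring)] at h2
  have e1 : i + ((1 + (m+2) : ℕ) : Fin N) = i + ((0 : ℕ) : Fin N) := by
    rw [fin_off_inj, modeq_small (by omega) (by omega)]; omega
  have e2 : i + ((e + 1 + (m+2) : ℕ) : Fin N) = i + ((e : ℕ) : Fin N) := by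
    rw [fin_off_inj, modeq_small (by omega) (by omega)]; omega
  have he3 : e = 0 ∨ e = 1 ∨ e = m + 2 := by
    rcases adj_elim_off h1 with h' | h' | h' | h'
    rotate_left
    · rw [e1] at h'; exact absurd h' not_val_pair_same
    · rw [show ((0 + 1 : ℕ) : Fin N) = ((1 : ℕ) : Fin N) from rfl] at h'
      exact absurd h' not_val_pair_same
    all_goals (
      rcases adj_elim_off h2 with h'' | h'' | h'' | h''
      rotate_left
      · rw [e2] at h''; exact absurd h'' not_val_pair_same
      · rw [show ((e + 1 : ℕ) : Fin N) = ((e + 1 : ℕ) : Fin N) from rfl] at h''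
        exact absurd h'' not_val_pair_same
      all_goals (
        rw [h'] at h''
        rw [pairOff_eq (by omega) (by omega) (by omega) (by omega)] at h''
        omega))
  rcases he3 with rfl | rfl | rfl
  · left; exact off_zero
  · right; left; push_cast; ring
  · right; right
    rw [off_add_one, show i + (((m+2) + 1 : ℕ) : Fin N) = i + ((0:ℕ) : Fin N) by
      rw [fin_off_inj, modeq_small (by omega) (by omega)]; omega, off_zero]

/-- `A` has exactly two neighbours -/
def Deg2 (A : TV (Fin N)) : Prop :=
  ∃ X Y : TV (Fin N), X ≠ Y ∧
    ∀ Z, (tokenGraph (cycleGraph N) 2).Adj A Z ↔ (Z = X ∨ Z = Y)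

lemma deg2_iso (g : tokenGraph (cycleGraph N) 2 ≃g tokenGraph (cycleGraph N) 2)
    (A : TV (Fin N)) (h : Deg2 A) : Deg2 (g A) := by
  obtain ⟨X, Y, hXY, hall⟩ := h
  refine ⟨g X, g Y, fun hc => hXY (g.injective hc), fun Z => ?_⟩
  have hz := g.apply_symm_apply Z
  constructor
  · intro h
    rw [← hz, g.map_rel_iff] at h
    rcases (hall _).mp h with h' | h'
    · left; rw [← hz, h']
    · right; rw [← hz, h']
  · intro h
    rw [← hz, g.map_rel_iff]
    apply (hall _).mpr
    rcases h with h' | h'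
    · left; exact g.injective (by rw [hz, h'])
    · right; exact g.injective (by rw [hz, h'])

lemma deg2_Pv (i : Fin N) : Deg2 (Pv i) := by
  refine ⟨Qv i, pr (i + ((1:ℕ) : Fin N)) (i + ((m + 2 : ℕ) : Fin N))
    (neOff (by omega) (by omega) (by omega)), ?_, ?_⟩
  · intro hc
    have := congrArg Subtype.val hc
    rw [Qv] at this
    rw [pr_val, pr_val] at this
    rw [pairOff_eq (by omega) (by omega) (by omega) (by omega)] at this
    omega
  · intro Z
    constructor
    · intro h
      rw [Pv] at h
      rcases adj_elim_off h with h' | h' | h' | h'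
      · left
        exact Subtype.ext (h'.trans (by rw [show ((1 + 1 : ℕ) : Fin N) = ((2:ℕ) : Fin N) from rfl]; rfl))
      · exfalso
        rw [show i + ((1 + (m+2) : ℕ) : Fin N) = i + ((0 : ℕ) : Fin N) by
          rw [fin_off_inj, modeq_small (by omega) (by omega)]; omega] at h'
        exact not_val_pair_same h'
      · exfalso
        rw [show ((0 + 1 : ℕ) : Fin N) = ((1 : ℕ) : Fin N) from rfl] at h'
        exact not_val_pair_same h'
      · right
        refine Subtype.ext (h'.trans ?_)
        rw [show i + ((0 + (m+2) : ℕ) : Fin N) = i + ((m + 2 : ℕ) : Fin N) by norm_num]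
        rfl
    · rintro (rfl | rfl)
      · exact Pv_adj_Qv i
      · rw [Pv, pr_comm]
        exact adj_off _ _ (neOff (by omega) (by omega) (by omega))
          ((cadj_off' (by omega) (by omega)).mpr (by omega))

lemma deg2_not (hm : 2 ≤ m) (i : Fin N) (d : ℕ) (hd : 2 ≤ d) (hd2 : d ≤ m + 1)
    {h : i + ((0:ℕ) : Fin N) ≠ i + (d : Fin N)} :
    ¬ Deg2 (pr (i + ((0:ℕ) : Fin N)) (i + (d : Fin N)) h) := by
  rintro ⟨X, Y, hXY, hall⟩
  set A := pr (i + ((0:ℕ) : Fin N)) (i + (d : Fin N)) h with hA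
  have n1 : i + ((1:ℕ) : Fin N) ≠ i + (d : Fin N) := neOff (by omega) (by omega) (by omega)
  have n2 : i + ((m + 2 : ℕ) : Fin N) ≠ i + (d : Fin N) := neOff (by omega) (by omega) (by omega)
  have n3 : i + ((0:ℕ) : Fin N) ≠ i + ((d + 1 : ℕ) : Fin N) := neOff (by omega) (by omega) (by omega)
  set Z1 := pr (i + ((1:ℕ) : Fin N)) (i + (d : Fin N)) n1 with hZ1
  set Z2 := pr (i + ((m + 2 : ℕ) : Fin N)) (i + (d : Fin N)) n2 with hZ2
  set Z3 := pr (i + ((0:ℕ) : Fin N)) (i + ((d + 1 : ℕ) : Fin N)) n3 with hZ3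
  have a1 : (tokenGraph (cycleGraph N) 2).Adj A Z1 := by
    rw [hA, hZ1, pr_comm, pr_comm (i + ((1:ℕ) : Fin N))]
    exact adj_off _ _ (neOff (by omega) (by omega) (by omega))
      ((cadj_off' (by omega) (by omega)).mpr (by omega))
  have a2 : (tokenGraph (cycleGraph N) 2).Adj A Z2 := by
    rw [hA, hZ2, pr_comm, pr_comm (i + ((m + 2 : ℕ) : Fin N))]
    exact adj_off _ _ (neOff (by omega) (by omega) (by omega))
      ((cadj_off' (by omega) (by omega)).mpr (by omega))
  have a3 : (tokenGraph (cycleGraph N) 2).Adj A Z3 := by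
    rw [hA, hZ3]
    exact adj_off _ _ (neOff (by omega) (by omega) (by omega))
      ((cadj_off' (by omega) (by omega)).mpr (by omega))
  have ne12 : Z1 ≠ Z2 := by
    intro hc
    have := congrArg Subtype.val hc
    rw [hZ1, hZ2, pr_val, pr_val] at this
    rw [pairOff_eq (by omega) (by omega) (by omega) (by omega)] at this
    omega
  have ne13 : Z1 ≠ Z3 := by
    intro hc
    have := congrArg Subtype.val hc
    rw [hZ1, hZ3, pr_val, pr_val] at this
    rw [pairOff_eq (by omega) (by omega) (by omega) (by omega)] at this
    omega
  have ne23 : Z2 ≠ Z3 := by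
    intro hc
    have := congrArg Subtype.val hc
    rw [hZ2, hZ3, pr_val, pr_val] at this
    rw [pairOff_eq (by omega) (by omega) (by omega) (by omega)] at this
    omega
  rcases (hall Z1).mp a1 with h1 | h1 <;> rcases (hall Z2).mp a2 with h2 | h2 <;>
    rcases (hall Z3).mp a3 with h3 | h3
  · exact ne12 (h1.trans h2.symm)
  · exact ne12 (h1.trans h2.symm)
  · exact ne13 (h1.trans h3.symm)
  · exact ne23 (h2.trans h3.symm)
  · exact ne23 (h2.trans h3.symm)
  · exact ne13 (h1.trans h3.symm)
  · exact ne12 (h1.trans h2.symm)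
  · exact ne12 (h1.trans h2.symm)

lemma deg2_char (hm : 2 ≤ m) (A : TV (Fin N)) (hA : Deg2 A) : ∃ i, A = Pv i := by
  obtain ⟨a, b, hab, rfl⟩ := tv_eq_pr A
  obtain ⟨e, he, rfl⟩ := rebase a b
  have h0 : pr a (a + ((e:ℕ) : Fin N)) hab =
      pr (a + ((0:ℕ) : Fin N)) (a + ((e:ℕ) : Fin N)) (by rw [off_zero]; exact hab) :=
    pr_congr off_zero.symm rfl
  have hepos : e ≠ 0 := by
    rintro rfl
    exact hab (by rw [off_zero])
  rcases Nat.lt_or_ge e 2 with h2 | h2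
  · -- e = 1
    have : e = 1 := by omega
    subst this
    exact ⟨a, by rw [h0]; rfl⟩
  · rcases Nat.lt_or_ge e (m + 2) with h3 | h3
    · -- 2 ≤ e ≤ m+1 : contradiction
      rw [h0] at hA
      exact absurd hA (deg2_not hm a e h2 (by omega))
    · -- e = m + 2
      have : e = m + 2 := by omega
      subst this
      refine ⟨a + ((m + 2 : ℕ) : Fin N), ?_⟩
      rw [h0, pr_comm, Pv]
      refine pr_congr ?_ ?_
      · rw [off_zero]
      · have : a + ((m + 2 : ℕ) : Fin N) + ((1:ℕ) : Fin N) = a + ((m + 3 : ℕ) : Fin N) := by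
          push_cast; ring
        rw [this, show a + ((m + 3 : ℕ) : Fin N) = a + ((0:ℕ) : Fin N) by
          rw [fin_off_inj, modeq_small (by omega) (by omega)]; omega]

lemma commonDD (hm : 2 ≤ m) (e : ℕ) (hd2 : e + 3 ≤ (m + 3) / 2) (i : Fin N) (X : TV (Fin N))
    {hA : i + ((0:ℕ) : Fin N) ≠ i + ((e + 2 : ℕ) : Fin N)}
    {hB : i + ((1:ℕ) : Fin N) ≠ i + ((e + 3 : ℕ) : Fin N)}
    (h1 : (tokenGraph (cycleGraph N) 2).Adj (pr (i + ((0:ℕ) : Fin N)) (i + ((e + 2 : ℕ) : Fin N)) hA) X)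
    (h2 : (tokenGraph (cycleGraph N) 2).Adj (pr (i + ((1:ℕ) : Fin N)) (i + ((e + 3 : ℕ) : Fin N)) hB) X) :
    X.val = {i + ((1:ℕ) : Fin N), i + ((e + 2 : ℕ) : Fin N)} ∨
    X.val = {i + ((0:ℕ) : Fin N), i + ((e + 3 : ℕ) : Fin N)} := by
  rcases adj_elim_off h1 with h' | h' | h' | h' <;> rcases adj_elim_off h2 with h'' | h'' | h'' | h'' <;>
    rw [h'] at h'' <;> rw [pairOff_eq (by omega) (by omega) (by omega) (by omega)] at h'' <;>
    first
      | omega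
      | (left; rw [h', pairOff_eq (by omega) (by omega) (by omega) (by omega)]; omega)
      | (right; rw [h', pairOff_eq (by omega) (by omega) (by omega) (by omega)]; omega)

theorem tokenHom_surj (hm : 2 ≤ m) :
    Surjective (tokenHom (G := cycleGraph N)) := by
  intro g
  have hP : ∀ i : Fin N, ∃ j, g (Pv i) = Pv j := fun i =>
    deg2_char hm _ (deg2_iso g _ (deg2_Pv i))
  choose σ hσ using hP
  have hσinj : Injective σ := by
    intro i j hij
    apply Pv_inj
    apply g.injective
    rw [hσ i, hσ j, hij]
  have hstep : ∀ x : Fin N, σ (x + 1) = σ x + 1 ∨ σ (x + 1) = σ x - 1 := by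
    intro x
    have c1 : (tokenGraph (cycleGraph N) 2).Adj (Pv (σ x)) (g (Qv x)) := by
      rw [← hσ]; exact g.map_rel_iff.mpr (Pv_adj_Qv x)
    have c2 : (tokenGraph (cycleGraph N) 2).Adj (Pv (σ (x + 1))) (g (Qv x)) := by
      rw [← hσ]; exact g.map_rel_iff.mpr (Pv_adj_Qv' x)
    rcases commonPP2 hm c1 c2 with h | h | h
    · exact absurd (succ_ne x (hσinj h)) (fun hc => hc)
    · left; exact h
    · right; rw [eq_sub_iff_add_eq]; exact h.symm
  obtain ⟨θ, hfP⟩ : ∃ θ : cycleGraph N ≃g cycleGraph N,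
      ∀ i, tokenHom θ (Pv i) = g (Pv i) := by
    rcases step_form hσinj hstep with hf | hf
    · refine ⟨rotIso (σ 0), fun i => ?_⟩
      apply Subtype.ext
      rw [tokenHom_apply_val, hσ i, Pv, Pv, pr_val, pr_val, Finset.image_insert,
        Finset.image_singleton, rotIso_apply, rotIso_apply, hf i]
      rw [fpair_eq_fpair_iff]
      exact Or.inl ⟨by ring, by ring⟩
    · refine ⟨refIso (σ 0 + 1), fun i => ?_⟩
      apply Subtype.ext
      rw [tokenHom_apply_val, hσ i, Pv, Pv, pr_val, pr_val, Finset.image_insert,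
        Finset.image_singleton, refIso_apply, refIso_apply, hf i]
      rw [fpair_eq_fpair_iff]
      refine Or.inr ⟨?_, ?_⟩ <;> (push_cast; ring)
  have hfQ : ∀ i, tokenHom θ (Qv i) = g (Qv i) := by
    intro i
    have d1 : (tokenGraph (cycleGraph N) 2).Adj (Pv (σ i)) (tokenHom θ (Qv i)) := by
      have h := (tokenHom θ).map_rel_iff.mpr (Pv_adj_Qv i)
      rwa [hfP i, hσ i] at h
    have d2 : (tokenGraph (cycleGraph N) 2).Adj (Pv (σ (i + 1))) (tokenHom θ (Qv i)) := by
      have h := (tokenHom θ).map_rel_iff.mpr (Pv_adj_Qv' i)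
      rwa [hfP (i + 1), hσ (i + 1)] at h
    have c1 : (tokenGraph (cycleGraph N) 2).Adj (Pv (σ i)) (g (Qv i)) := by
      rw [← hσ]; exact g.map_rel_iff.mpr (Pv_adj_Qv i)
    have c2 : (tokenGraph (cycleGraph N) 2).Adj (Pv (σ (i + 1))) (g (Qv i)) := by
      rw [← hσ]; exact g.map_rel_iff.mpr (Pv_adj_Qv' i)
    rcases hstep i with hs | hs
    · rw [hs] at d2 c2
      rw [commonPP hm d1 d2, commonPP hm c1 c2]
    · have hj : σ (i + 1) + 1 = σ i := by rw [hs]; exact sub_add_cancel _ _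
      rw [← hj] at d1 c1
      rw [commonPP hm d2 d1, commonPP hm c2 c1]
  have hmove : ∀ d : ℕ, 1 ≤ d → d ≤ (m + 3) / 2 →
      ∀ (i : Fin N) (h : i + ((0:ℕ) : Fin N) ≠ i + ((d : ℕ) : Fin N)),
        tokenHom θ (pr _ _ h) = g (pr _ _ h) := by
    intro d
    induction d using Nat.strong_induction_on with
    | _ d ih =>
      intro hd1 hd2 i h
      by_cases he1 : d = 1
      · subst he1; exact hfP i
      by_cases he2 : d = 2
      · subst he2; exact hfQ i
      obtain ⟨e, rfl⟩ : ∃ e, d = e + 3 := ⟨d - 3, by omega⟩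
      have nB : (i + ((1:ℕ) : Fin N)) + ((0:ℕ) : Fin N) ≠
          (i + ((1:ℕ) : Fin N)) + ((e + 2 : ℕ) : Fin N) := neOff (by omega) (by omega) (by omega)
      have nW : (i + ((1:ℕ) : Fin N)) + ((0:ℕ) : Fin N) ≠
          (i + ((1:ℕ) : Fin N)) + ((e + 1 : ℕ) : Fin N) := neOff (by omega) (by omega) (by omega)
      have nA : i + ((0:ℕ) : Fin N) ≠ i + ((e + 2 : ℕ) : Fin N) :=
        neOff (by omega) (by omega) (by omega)
      have nB' : i + ((1:ℕ) : Fin N) ≠ i + ((e + 3 : ℕ) : Fin N) :=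
        neOff (by omega) (by omega) (by omega)
      have nW' : i + ((1:ℕ) : Fin N) ≠ i + ((e + 2 : ℕ) : Fin N) :=
        neOff (by omega) (by omega) (by omega)
      -- identifications
      have eB : pr _ _ nB = pr _ _ nB' :=
        pr_congr (by rw [off_zero]) (by push_cast; ring)
      have eW : pr _ _ nW = pr _ _ nW' :=
        pr_congr (by rw [off_zero]) (by push_cast; ring)
      have hFA : tokenHom θ (pr _ _ nA) = g (pr _ _ nA) := ih (e + 2) (by omega) (by omega) (by omega) i nA
      have hFB : tokenHom θ (pr _ _ nB') = g (pr _ _ nB') := by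
        rw [← eB]; exact ih (e + 2) (by omega) (by omega) (by omega) (i + ((1:ℕ) : Fin N)) nB
      have hFW : tokenHom θ (pr _ _ nW') = g (pr _ _ nW') := by
        rw [← eW]; exact ih (e + 1) (by omega) (by omega) (by omega) (i + ((1:ℕ) : Fin N)) nW
      -- adjacencies
      have aAV : (tokenGraph (cycleGraph N) 2).Adj (pr _ _ nA) (pr _ _ h) :=
        adj_off _ _ (neOff (by omega) (by omega) (by omega))
          ((cadj_off' (by omega) (by omega)).mpr (by omega))
      have aBV : (tokenGraph (cycleGraph N) 2).Adj (pr _ _ nB') (pr _ _ h) := by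
        rw [pr_comm, pr_comm (i + ((0:ℕ) : Fin N))]
        exact adj_off _ _ (neOff (by omega) (by omega) (by omega))
          ((cadj_off' (by omega) (by omega)).mpr (by omega))
      -- the pulled-back common neighbour
      set u := (tokenHom θ).symm (g (pr _ _ h)) with hu
      have hu1 : (tokenGraph (cycleGraph N) 2).Adj (pr _ _ nA) u := by
        have h1 : (tokenGraph (cycleGraph N) 2).Adj (g (pr _ _ nA)) (g (pr _ _ h)) :=
          g.map_rel_iff.mpr aAV
        rw [← hFA] at h1
        have h2 := (tokenHom θ).symm.map_rel_iff.mpr h1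
        rwa [RelIso.symm_apply_apply] at h2
      have hu2 : (tokenGraph (cycleGraph N) 2).Adj (pr _ _ nB') u := by
        have h1 : (tokenGraph (cycleGraph N) 2).Adj (g (pr _ _ nB')) (g (pr _ _ h)) :=
          g.map_rel_iff.mpr aBV
        rw [← hFB] at h1
        have h2 := (tokenHom θ).symm.map_rel_iff.mpr h1
        rwa [RelIso.symm_apply_apply] at h2
      rcases commonDD hm e (by omega) i u hu1 hu2 with hc | hc
      · exfalso
        have huW : u = pr _ _ nW' := Subtype.ext (by rw [hc, pr_val])
        have hgV := congrArg (tokenHom θ) huW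
        rw [hu, RelIso.apply_symm_apply, hFW] at hgV
        have hVW := g.injective hgV
        have := congrArg Subtype.val hVW
        rw [pr_val, pr_val] at this
        rw [pairOff_eq (by omega) (by omega) (by omega) (by omega)] at this
        omega
      · have huV : u = pr _ _ h := Subtype.ext (by rw [hc, pr_val])
        have hgV := congrArg (tokenHom θ) huV
        rw [hu, RelIso.apply_symm_apply] at hgV
        exact hgV.symm
  refine ⟨θ, ?_⟩
  apply RelIso.ext
  intro X
  obtain ⟨a, b, hab, rfl⟩ := tv_eq_pr X
  obtain ⟨e, he, rfl⟩ := rebase a b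
  have hepos : e ≠ 0 := by rintro rfl; exact hab (by rw [off_zero])
  by_cases hle : e ≤ (m + 3) / 2
  · have h' : a + ((0:ℕ) : Fin N) ≠ a + ((e : ℕ) : Fin N) :=
      neOff (by omega) (by omega) (by omega)
    have : pr a (a + ((e : ℕ) : Fin N)) hab = pr _ _ h' := pr_congr off_zero.symm rfl
    rw [this]
    exact hmove e (by omega) hle a h'
  · set b := a + ((e : ℕ) : Fin N) with hb
    have h' : b + ((0:ℕ) : Fin N) ≠ b + ((m + 3 - e : ℕ) : Fin N) :=
      neOff (by omega) (by omega) (by omega)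
    have : pr a b hab = pr _ _ h' := by
      rw [pr_comm]
      refine pr_congr off_zero.symm ?_
      rw [hb, show a + ((e : ℕ) : Fin N) + ((m + 3 - e : ℕ) : Fin N) =
        a + ((e + (m + 3 - e) : ℕ) : Fin N) from by push_cast; ring,
        show a + ((e + (m + 3 - e) : ℕ) : Fin N) = a + ((0 : ℕ) : Fin N) from by
          rw [fin_off_inj, modeq_small (by omega) (by omega)]; omega, off_zero]
    rw [this]
    exact hmove (m + 3 - e) (by omega) (by omega) b h'

end surj

section three

instance tokenAdjDec (n : ℕ) : DecidableRel (tokenGraph (cycleGraph n) 2).Adj := fun A B =>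
  decidable_of_iff (∃ a b, (cycleGraph n).Adj a b ∧ A.val ∆ B.val = {a, b}) Iff.rfl

lemma three_adj : ∀ A B : TV (Fin 3), A ≠ B → (tokenGraph (cycleGraph 3) 2).Adj A B := by decide

lemma three_adj_iff (A B : TV (Fin 3)) : (tokenGraph (cycleGraph 3) 2).Adj A B ↔ A ≠ B :=
  ⟨fun h => (tokenGraph (cycleGraph 3) 2).ne_of_adj h, three_adj A B⟩

def three_equiv_perm :
    (tokenGraph (cycleGraph 3) 2 ≃g tokenGraph (cycleGraph 3) 2) ≃ Equiv.Perm (TV (Fin 3)) where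
  toFun f := f.toEquiv
  invFun p := ⟨p, by
    intro A B
    rw [three_adj_iff, three_adj_iff, Ne, Ne, (Equiv.apply_eq_iff_eq p).not]⟩
  left_inv f := RelIso.ext fun _ => rfl
  right_inv p := Equiv.ext fun _ => rfl

lemma three_card :
    Nat.card (tokenGraph (cycleGraph 3) 2 ≃g tokenGraph (cycleGraph 3) 2) = 6 := by
  rw [Nat.card_congr three_equiv_perm, Nat.card_eq_fintype_card, Fintype.card_perm]
  have h3 : Fintype.card (TV (Fin 3)) = 3 := by decide
  rw [h3]
  rfl

lemma finite_token_aut (n : ℕ) :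
    Finite (tokenGraph (cycleGraph n) 2 ≃g tokenGraph (cycleGraph n) 2) := by
  apply Finite.of_injective (fun f : tokenGraph (cycleGraph n) 2 ≃g tokenGraph (cycleGraph n) 2
    => f.toEquiv)
  intro f g h
  exact RelIso.ext fun x => congrFun (congrArg (fun (e : _ ≃ _) => (e : _ → _)) h) x

end three

/-- For `n ≥ 3`, `n ≠ 4`, every automorphism of `F_2(C_n)` is induced by an automorphism
of the cycle `C_n`: the group homomorphism `θ ↦ f_θ` (where `f_θ(A) = θ '' A`) from
`Aut(C_n)` to `Aut(F_2(C_n))` is a group isomorphism; in particular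
`|Aut(F_2(C_n))| = 2n`. -/
theorem stmt_3 (n : ℕ) (hn : 3 ≤ n) (hn4 : n ≠ 4) :
    (∃ φ : (cycleGraph n ≃g cycleGraph n) ≃*
        (tokenGraph (cycleGraph n) 2 ≃g tokenGraph (cycleGraph n) 2),
      ∀ (θ : cycleGraph n ≃g cycleGraph n) (A : {s : Finset (Fin n) // s.card = 2}),
        ((φ θ) A).val = A.val.image θ) ∧
    Nat.card (tokenGraph (cycleGraph n) 2 ≃g tokenGraph (cycleGraph n) 2) = 2 * n := by
  obtain ⟨m, rfl⟩ : ∃ m, n = m + 3 := ⟨n - 3, by omega⟩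
  have hbij : Bijective (tokenHom (G := cycleGraph (m + 3))) := by
    constructor
    · exact tokenHom_inj
    · rcases Nat.eq_zero_or_pos m with rfl | hm
      · -- n = 3 : counting argument
        have hfin := finite_token_aut 3
        have h6 : Nat.card (cycleGraph (0 + 3) ≃g cycleGraph (0 + 3)) = 6 := by
          rw [cycle_aut_card]
        exact ((Nat.bijective_iff_injective_and_card _).mpr
          ⟨tokenHom_inj, by rw [h6, three_card]⟩).surjective
      · have hm2 : 2 ≤ m := by omega
        exact tokenHom_surj hm2
  constructor
  · exact ⟨MulEquiv.ofBijective _ hbij, fun θ A => rfl⟩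
  · rw [← Nat.card_congr (MulEquiv.ofBijective _ hbij).toEquiv, cycle_aut_card]
end

section
/- Let n ≥ 4 be an integer. Then every automorphism of F_2(A_{1,n}) is induced by an automorphism of A_{1,n}; that is, the group homomorphism θ ↦ f_θ from Aut(A_{1,n}) to Aut(F_2(A_{1,n})) is an isomorphism. In particular, Aut(F_2(A_{1,n})) has order 2. -/
open scoped symmDiff

/-- The fan graph `A_{1,n} = K_1 + P_n`: the hub `none` is joined to every vertex of a
path on `u_0, …, u_{n-1}` (the vertices `some i`). -/
def fanGraph (n : ℕ) : SimpleGraph (Option (Fin n)) :=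
  SimpleGraph.fromRel fun a b =>
    a = none ∨ ∃ i j : Fin n, a = some i ∧ b = some j ∧ (i : ℕ) + 1 = (j : ℕ)

namespace Tok

lemma pair_eq_pair_iff {α : Type*} [DecidableEq α] {a b c d : α} :
    ({a,b} : Finset α) = {c,d} ↔ (a = c ∧ b = d) ∨ (a = d ∧ b = c) := by
  constructor
  · intro h
    have ha : a ∈ ({c,d} : Finset α) := by rw [← h]; simp
    have hb : b ∈ ({c,d} : Finset α) := by rw [← h]; simp
    have hc : c ∈ ({a,b} : Finset α) := by rw [h]; simp
    have hd : d ∈ ({a,b} : Finset α) := by rw [h]; simp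
    simp only [Finset.mem_insert, Finset.mem_singleton] at ha hb hc hd
    rcases ha with h1 | h1 <;> rcases hb with h2 | h2 <;> tauto
  · rintro (⟨rfl, rfl⟩ | ⟨rfl, rfl⟩)
    · rfl
    · exact Finset.pair_comm a b

variable {n : ℕ}

abbrev V2 (n : ℕ) := {s : Finset (Option (Fin n)) // s.card = 2}

abbrev TG (n : ℕ) := tokenGraph (fanGraph n) 2

lemma fan_adj_iff (a b : Option (Fin n)) :
    (fanGraph n).Adj a b ↔ a ≠ b ∧ (a = none ∨ b = none ∨
      ∃ i j : Fin n, a = some i ∧ b = some j ∧ ((i:ℕ) + 1 = j ∨ (j:ℕ) + 1 = i)) := by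
  rw [fanGraph, SimpleGraph.fromRel_adj]
  constructor
  · rintro ⟨hne, (h | ⟨i, j, rfl, rfl, hij⟩) | (h | ⟨i, j, rfl, rfl, hij⟩)⟩
    · exact ⟨hne, Or.inl h⟩
    · exact ⟨hne, Or.inr <| Or.inr ⟨i, j, rfl, rfl, Or.inl hij⟩⟩
    · exact ⟨hne, Or.inr <| Or.inl h⟩
    · exact ⟨hne, Or.inr <| Or.inr ⟨j, i, rfl, rfl, Or.inr hij⟩⟩
  · rintro ⟨hne, (h | h | ⟨i, j, rfl, rfl, (hij | hij)⟩)⟩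
    · exact ⟨hne, Or.inl (Or.inl h)⟩
    · exact ⟨hne, Or.inr (Or.inl h)⟩
    · exact ⟨hne, Or.inl (Or.inr ⟨i, j, rfl, rfl, hij⟩)⟩
    · exact ⟨hne, Or.inr (Or.inr ⟨j, i, rfl, rfl, hij⟩)⟩

lemma fan_adj_none_some (i : Fin n) : (fanGraph n).Adj none (some i) := by
  rw [fan_adj_iff]; simp

lemma fan_adj_some_some (i j : Fin n) :
    (fanGraph n).Adj (some i) (some j) ↔ ((i:ℕ) + 1 = j ∨ (j:ℕ) + 1 = i) := by
  rw [fan_adj_iff]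
  constructor
  · rintro ⟨hne, (h | h | ⟨i', j', hi, hj, h⟩)⟩ <;> simp_all
  · intro h
    refine ⟨?_, Or.inr <| Or.inr ⟨i, j, rfl, rfl, h⟩⟩
    intro hc
    rw [Option.some_inj] at hc
    subst hc
    omega

lemma fan_adj_some_none (i : Fin n) : (fanGraph n).Adj (some i) none :=
  (fan_adj_none_some i).symm

private lemma half_master (A B : Finset (Option (Fin n))) (hA : A.card = 2) (hB : B.card = 2)
    (a b : Option (Fin n)) (hab : a ≠ b) (hd : A ∆ B = {a,b})
    (haA : a ∈ A) (hbB : b ∈ B) (hbA : b ∉ A) :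
    ∃ x, x ≠ a ∧ x ≠ b ∧ A = {x,a} ∧ B = {x,b} := by
  obtain ⟨c, d, hcd, hA2⟩ := Finset.card_eq_two.mp hA
  have haA' := haA
  rw [hA2, Finset.mem_insert, Finset.mem_singleton] at haA'
  obtain ⟨x, hxa, hAx⟩ : ∃ x, x ≠ a ∧ A = {a, x} := by
    rcases haA' with rfl | rfl
    · exact ⟨d, Ne.symm hcd, hA2⟩
    · exact ⟨c, hcd, by rw [hA2, Finset.pair_comm]⟩
  have hxb : x ≠ b := by
    rintro rfl
    exact hbA (by rw [hAx]; simp)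
  have hxA : x ∈ A := by rw [hAx]; simp
  have hxB : x ∈ B := by
    by_contra hxB
    have : x ∈ A ∆ B := by simp [Finset.mem_symmDiff, hxA, hxB]
    rw [hd] at this
    simp only [Finset.mem_insert, Finset.mem_singleton] at this
    tauto
  have hBx : B = {x, b} := by
    refine (Finset.eq_of_subset_of_card_le ?_ ?_).symm
    · intro y hy
      simp only [Finset.mem_insert, Finset.mem_singleton] at hy
      rcases hy with rfl | rfl <;> assumption
    · rw [hB, Finset.card_pair hxb]
  exact ⟨x, hxa, hxb, by rw [hAx, Finset.pair_comm], hBx⟩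

/-- Master adjacency characterization in the 2-token graph of the fan. -/
lemma tok_adj_iff (A B : V2 n) :
    (TG n).Adj A B ↔ ∃ x a b, x ≠ a ∧ x ≠ b ∧ (fanGraph n).Adj a b ∧
      A.val = {x,a} ∧ B.val = {x,b} := by
  constructor
  · rintro ⟨a, b, hab, hd⟩
    have hne : a ≠ b := hab.ne
    have haM : a ∈ A.val ∆ B.val := by rw [hd]; simp
    have hbM : b ∈ A.val ∆ B.val := by rw [hd]; simp
    rw [Finset.mem_symmDiff] at haM hbM
    rcases haM with ⟨haA, haB⟩ | ⟨haB, haA⟩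
    · rcases hbM with ⟨hbA, hbB⟩ | ⟨hbB, hbA⟩
      · -- both in A \ B : contradiction
        exfalso
        have hBA : B.val = A.val := by
          apply Finset.eq_of_subset_of_card_le
          · intro y hy
            by_contra hyA
            have : y ∈ A.val ∆ B.val := by
              simp [Finset.mem_symmDiff, hy, hyA]
            rw [hd] at this
            simp only [Finset.mem_insert, Finset.mem_singleton] at this
            rcases this with rfl | rfl <;> tauto
          · rw [A.2, B.2]
        rw [hBA] at hd
        simp only [symmDiff_self] at hd
        have : a ∈ (⊥ : Finset (Option (Fin n))) := by
          rw [hd]; simp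
        simp at this
      · obtain ⟨x, h1, h2, h3, h4⟩ :=
          half_master A.val B.val A.2 B.2 a b hne hd haA hbB hbA
        exact ⟨x, a, b, h1, h2, hab, h3, h4⟩
    · rcases hbM with ⟨hbA, hbB⟩ | ⟨hbB, hbA⟩
      · have hd' : A.val ∆ B.val = {b, a} := by rw [hd, Finset.pair_comm]
        obtain ⟨x, h1, h2, h3, h4⟩ :=
          half_master A.val B.val A.2 B.2 b a (Ne.symm hne) hd' hbA haB haA
        exact ⟨x, b, a, h1, h2, hab.symm, h3, h4⟩
      · -- both in B \ A : contradiction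
        exfalso
        have hBA : A.val = B.val := by
          apply Finset.eq_of_subset_of_card_le
          · intro y hy
            by_contra hyB
            have : y ∈ A.val ∆ B.val := by
              simp [Finset.mem_symmDiff, hy, hyB]
            rw [hd] at this
            simp only [Finset.mem_insert, Finset.mem_singleton] at this
            rcases this with rfl | rfl <;> tauto
          · rw [A.2, B.2]
        rw [hBA] at hd
        simp only [symmDiff_self] at hd
        have : a ∈ (⊥ : Finset (Option (Fin n))) := by
          rw [hd]; simp
        simp at this
  · rintro ⟨x, a, b, hxa, hxb, hab, hA, hB⟩
    refine ⟨a, b, hab, ?_⟩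
    rw [hA, hB]
    ext y
    simp only [Finset.mem_symmDiff, Finset.mem_insert, Finset.mem_singleton]
    have hne : a ≠ b := hab.ne
    by_cases h1 : y = x <;> by_cases h2 : y = a <;> by_cases h3 : y = b <;> simp_all

/-! ### The vertices `hb i = {hub, u_i}` and `pp i j = {u_i, u_j}` -/

def hb (i : Fin n) : V2 n := ⟨{none, some i}, Finset.card_pair (by simp)⟩

def pp (i j : Fin n) (h : i ≠ j) : V2 n :=
  ⟨{some i, some j}, Finset.card_pair (by simpa using h)⟩

lemma hb_val (i : Fin n) : (hb i).val = {none, some i} := rfl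

lemma pp_val (i j : Fin n) (h : i ≠ j) : (pp i j h).val = {some i, some j} := rfl

@[simp] lemma hb_inj {i j : Fin n} : hb i = hb j ↔ i = j := by
  constructor
  · intro h
    have := congrArg Subtype.val h
    rw [hb_val, hb_val, pair_eq_pair_iff] at this
    simp at this
    exact this
  · rintro rfl; rfl

lemma pp_comm (i j : Fin n) (h : i ≠ j) : pp i j h = pp j i (Ne.symm h) :=
  Subtype.ext (Finset.pair_comm _ _)

lemma pp_eq_pp_iff {i j k l : Fin n} {hij : i ≠ j} {hkl : k ≠ l} :
    pp i j hij = pp k l hkl ↔ (i = k ∧ j = l) ∨ (i = l ∧ j = k) := by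
  constructor
  · intro h
    have := congrArg Subtype.val h
    rw [pp_val, pp_val, pair_eq_pair_iff] at this
    simpa using this
  · rintro (⟨rfl, rfl⟩ | ⟨rfl, rfl⟩)
    · rfl
    · exact pp_comm _ _ _

lemma hb_ne_pp {i j k : Fin n} {h : j ≠ k} : hb i ≠ pp j k h := by
  intro he
  have := congrArg Subtype.val he
  rw [hb_val, pp_val, pair_eq_pair_iff] at this
  simp at this

lemma V2_cases (A : V2 n) : (∃ i, A = hb i) ∨ (∃ i j h, A = pp i j h) := by
  obtain ⟨x, y, hxy, hA⟩ := Finset.card_eq_two.mp A.2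
  match x, y, hxy, hA with
  | none, none, hxy, hA => exact absurd rfl hxy
  | none, some j, hxy, hA => exact Or.inl ⟨j, Subtype.ext hA⟩
  | some i, none, hxy, hA =>
      exact Or.inl ⟨i, Subtype.ext (by rw [hA, Finset.pair_comm]; rfl)⟩
  | some i, some j, hxy, hA =>
      exact Or.inr ⟨i, j, by simpa using hxy, Subtype.ext hA⟩

/-! ### Adjacency between the standard vertices -/

lemma adj_hb_hb (i j : Fin n) :
    (TG n).Adj (hb i) (hb j) ↔ ((i:ℕ) + 1 = j ∨ (j:ℕ) + 1 = i) := by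
  rw [tok_adj_iff]
  constructor
  · rintro ⟨x, a, b, hxa, hxb, hab, hA, hB⟩
    rw [hb_val, pair_eq_pair_iff] at hA hB
    obtain ⟨h1, h2⟩ | ⟨h1, h2⟩ := hA <;> obtain ⟨h3, h4⟩ | ⟨h3, h4⟩ := hB <;>
      subst_eqs <;> first
      | (rw [fan_adj_some_some] at hab; exact hab)
      | simp_all
      | (exact absurd rfl hab.ne)
  · intro h
    refine ⟨none, some i, some j, by simp, by simp, ?_, rfl, rfl⟩
    rw [fan_adj_some_some]
    exact h

lemma adj_hb_pp (i j k : Fin n) (hjk : j ≠ k) :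
    (TG n).Adj (hb i) (pp j k hjk) ↔ i = j ∨ i = k := by
  rw [tok_adj_iff]
  constructor
  · rintro ⟨x, a, b, hxa, hxb, hab, hA, hB⟩
    rw [hb_val, pair_eq_pair_iff] at hA
    rw [pp_val, pair_eq_pair_iff] at hB
    obtain ⟨h1, h2⟩ | ⟨h1, h2⟩ := hA <;> obtain ⟨h3, h4⟩ | ⟨h3, h4⟩ := hB <;>
      subst_eqs <;> simp_all
  · rintro (rfl | rfl)
    · exact ⟨some i, none, some k, by simp, by simpa using hjk, fan_adj_none_some k,
        Finset.pair_comm _ _, rfl⟩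
    · refine ⟨some i, none, some j, by simp, by simpa using (Ne.symm hjk), fan_adj_none_some j,
        Finset.pair_comm _ _, ?_⟩
      rw [pp_val, Finset.pair_comm]

/-- Path-adjacency for indices. -/
def padj (i j : Fin n) : Prop := (i:ℕ) + 1 = j ∨ (j:ℕ) + 1 = i

lemma padj_ne {i j : Fin n} (h : padj i j) : i ≠ j := by
  rintro rfl
  rcases h with h | h <;> omega

lemma padj_symm {i j : Fin n} (h : padj i j) : padj j i := h.symm

lemma adj_pp_pp (i j : Fin n) (hij : i ≠ j) (k l : Fin n) (hkl : k ≠ l) :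
    (TG n).Adj (pp i j hij) (pp k l hkl) ↔
      (i = k ∧ padj j l) ∨ (i = l ∧ padj j k) ∨ (j = k ∧ padj i l) ∨ (j = l ∧ padj i k) := by
  rw [tok_adj_iff]
  constructor
  · rintro ⟨x, a, b, hxa, hxb, hab, hA, hB⟩
    rw [pp_val, pair_eq_pair_iff] at hA hB
    obtain ⟨h1, h2⟩ | ⟨h1, h2⟩ := hA <;> obtain ⟨h3, h4⟩ | ⟨h3, h4⟩ := hB <;>
      subst_eqs <;> simp_all [padj, fan_adj_some_some] <;> tauto
  · rintro (⟨rfl, hp⟩ | ⟨rfl, hp⟩ | ⟨rfl, hp⟩ | ⟨rfl, hp⟩)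
    · exact ⟨some i, some j, some l, by simpa using hij, by simpa using hkl,
        (fan_adj_some_some _ _).mpr hp, rfl, rfl⟩
    · exact ⟨some i, some j, some k, by simpa using hij,
        by simpa using (Ne.symm hkl), (fan_adj_some_some _ _).mpr hp, rfl, Finset.pair_comm _ _⟩
    · exact ⟨some j, some i, some l, by simpa using (Ne.symm hij), by simpa using hkl,
        (fan_adj_some_some _ _).mpr hp, Finset.pair_comm _ _, rfl⟩
    · exact ⟨some j, some i, some k, by simpa using (Ne.symm hij),
        by simpa using (Ne.symm hkl), (fan_adj_some_some _ _).mpr hp,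
        Finset.pair_comm _ _, Finset.pair_comm _ _⟩

lemma nbr_hb {A : V2 n} {i : Fin n} (h : (TG n).Adj A (hb i)) :
    (∃ j, padj i j ∧ A = hb j) ∨ (∃ j hj, A = pp i j hj) := by
  rcases V2_cases A with ⟨j, rfl⟩ | ⟨j, k, hjk, rfl⟩
  · rw [adj_hb_hb] at h
    exact Or.inl ⟨j, Or.symm h, rfl⟩
  · rw [SimpleGraph.adj_comm, adj_hb_pp] at h
    rcases h with rfl | rfl
    · exact Or.inr ⟨k, hjk, rfl⟩
    · exact Or.inr ⟨j, Ne.symm hjk, pp_comm _ _ _⟩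

lemma nbr_pp {A : V2 n} {i j : Fin n} {hij : i ≠ j} (h : (TG n).Adj A (pp i j hij)) :
    A = hb i ∨ A = hb j ∨ (∃ k hk, padj k j ∧ A = pp i k hk) ∨
      (∃ k hk, padj k i ∧ A = pp j k hk) := by
  rcases V2_cases A with ⟨k, rfl⟩ | ⟨k, l, hkl, rfl⟩
  · rw [adj_hb_pp] at h
    rcases h with rfl | rfl
    · exact Or.inl rfl
    · exact Or.inr (Or.inl rfl)
  · rw [adj_pp_pp] at h
    rcases h with ⟨rfl, hp⟩ | ⟨rfl, hp⟩ | ⟨rfl, hp⟩ | ⟨rfl, hp⟩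
    · exact Or.inr <| Or.inr <| Or.inl ⟨l, hkl, hp, rfl⟩
    · exact Or.inr <| Or.inr <| Or.inr ⟨l, hkl, hp, rfl⟩
    · exact Or.inr <| Or.inr <| Or.inl ⟨k, Ne.symm hkl, hp, pp_comm _ _ _⟩
    · exact Or.inr <| Or.inr <| Or.inr ⟨k, Ne.symm hkl, hp, pp_comm _ _ _⟩

lemma pigeon {α : Type*} [DecidableEq α] {B1 B2 B3 B4 x y z : α}
    (h12 : B1 ≠ B2) (h13 : B1 ≠ B3) (h14 : B1 ≠ B4) (h23 : B2 ≠ B3) (h24 : B2 ≠ B4)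
    (h34 : B3 ≠ B4)
    (m1 : B1 = x ∨ B1 = y ∨ B1 = z) (m2 : B2 = x ∨ B2 = y ∨ B2 = z)
    (m3 : B3 = x ∨ B3 = y ∨ B3 = z) (m4 : B4 = x ∨ B4 = y ∨ B4 = z) : False := by
  have hsub : ({B1, B2, B3, B4} : Finset α) ⊆ {x, y, z} := by
    intro t ht
    simp only [Finset.mem_insert, Finset.mem_singleton] at ht ⊢
    rcases ht with rfl | rfl | rfl | rfl <;> tauto
  have hcard : ({B1, B2, B3, B4} : Finset α).card = 4 := by
    rw [Finset.card_insert_of_notMem (by simp [h12, h13, h14]),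
      Finset.card_insert_of_notMem (by simp [h23, h24]),
      Finset.card_insert_of_notMem (by simp [h34]), Finset.card_singleton]
  have h1 := Finset.card_le_card hsub
  have h2 : ({x, y, z} : Finset α).card ≤ 3 := by
    refine le_trans (Finset.card_insert_le _ _) ?_
    refine le_trans (Nat.add_le_add_right (Finset.card_insert_le _ _) 1) ?_
    simp
  omega

section Main

variable {n : ℕ}

/-- The two "corner" vertices of the token graph. -/
def cL (hn : 4 ≤ n) : V2 n :=
  pp ⟨0, by omega⟩ ⟨1, by omega⟩ (by simp only [Ne, Fin.mk.injEq]; omega)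

def cR (hn : 4 ≤ n) : V2 n :=
  pp ⟨n-2, by omega⟩ ⟨n-1, by omega⟩ (by simp only [Ne, Fin.mk.injEq]; omega)

lemma cL_ne_cR (hn : 4 ≤ n) : cL hn ≠ cR hn := by
  simp only [cL, cR, Ne, pp_eq_pp_iff, Fin.mk.injEq]
  omega

/-- Neighbours of the left corner. -/
lemma nbr_cL (hn : 4 ≤ n) {A : V2 n} (h : (TG n).Adj A (cL hn)) :
    A = hb ⟨0, by omega⟩ ∨ A = hb ⟨1, by omega⟩ ∨
      A = pp ⟨0, by omega⟩ ⟨2, by omega⟩ (by simp only [Ne, Fin.mk.injEq]; omega) := by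
  rw [cL] at h
  rcases nbr_pp h with h1 | h1 | ⟨k, hk, hp, h1⟩ | ⟨k, hk, hp, h1⟩
  · exact Or.inl h1
  · exact Or.inr (Or.inl h1)
  · refine Or.inr (Or.inr ?_)
    rw [h1, pp_eq_pp_iff]
    rcases hp with hp | hp
    · exfalso
      simp only [Fin.val_mk] at hp
      exact hk (Fin.ext (by simp only [Fin.val_mk]; omega)).symm
    · simp only [Fin.val_mk] at hp
      exact Or.inl ⟨rfl, Fin.ext (by simp only [Fin.val_mk]; omega)⟩
  · exfalso
    rcases hp with hp | hp
    · simp only [Fin.val_mk] at hp; omega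
    · simp only [Fin.val_mk] at hp
      exact hk (Fin.ext (by simp only [Fin.val_mk]; omega)).symm

/-- Neighbours of the right corner. -/
lemma nbr_cR (hn : 4 ≤ n) {A : V2 n} (h : (TG n).Adj A (cR hn)) :
    A = hb ⟨n-2, by omega⟩ ∨ A = hb ⟨n-1, by omega⟩ ∨
      A = pp ⟨n-1, by omega⟩ ⟨n-3, by omega⟩ (by simp only [Ne, Fin.mk.injEq]; omega) := by
  rw [cR] at h
  rcases nbr_pp h with h1 | h1 | ⟨k, hk, hp, h1⟩ | ⟨k, hk, hp, h1⟩
  · exact Or.inl h1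
  · exact Or.inr (Or.inl h1)
  · exfalso
    rcases hp with hp | hp
    · simp only [Fin.val_mk] at hp
      exact hk (Fin.ext (by simp only [Fin.val_mk]; omega)).symm
    · simp only [Fin.val_mk] at hp; omega
  · refine Or.inr (Or.inr ?_)
    rw [h1, pp_eq_pp_iff]
    rcases hp with hp | hp
    · simp only [Fin.val_mk] at hp
      exact Or.inl ⟨rfl, Fin.ext (by simp only [Fin.val_mk]; omega)⟩
    · exfalso
      simp only [Fin.val_mk] at hp
      exact hk (Fin.ext (by simp only [Fin.val_mk]; omega)).symm

/-- Abbreviation for the 6+4 conclusion. -/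
def FourNbrs (A : V2 n) : Prop :=
  ∃ B1 B2 B3 B4 : V2 n,
    (B1 ≠ B2 ∧ B1 ≠ B3 ∧ B1 ≠ B4 ∧ B2 ≠ B3 ∧ B2 ≠ B4 ∧ B3 ≠ B4) ∧
    ((TG n).Adj B1 A ∧ (TG n).Adj B2 A ∧ (TG n).Adj B3 A ∧ (TG n).Adj B4 A)

lemma four_nbrs_hb (hn : 4 ≤ n) (i : Fin n) : FourNbrs (hb i) := by
  obtain ⟨k1, k2, k3, hlt, hne⟩ : ∃ k1 k2 k3 : ℕ, (k1 < k2 ∧ k2 < k3 ∧ k3 < n) ∧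
      (k1 ≠ i.val ∧ k2 ≠ i.val ∧ k3 ≠ i.val) := by
    by_cases h0 : i.val = 0
    · exact ⟨1, 2, 3, by omega, by omega⟩
    · by_cases h1 : i.val = 1
      · exact ⟨0, 2, 3, by omega, by omega⟩
      · by_cases h2 : i.val = 2
        · exact ⟨0, 1, 3, by omega, by omega⟩
        · exact ⟨0, 1, 2, by omega, by omega⟩
  obtain ⟨jj, hjj⟩ : ∃ jj : ℕ, jj < n ∧ (i.val + 1 = jj ∨ jj + 1 = i.val) := by
    by_cases hi : i.val + 1 < n
    · exact ⟨i.val + 1, hi, Or.inl rfl⟩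
    · exact ⟨i.val - 1, by omega, Or.inr (by omega)⟩
  refine ⟨pp i ⟨k1, by omega⟩ (by simp only [Ne, Fin.ext_iff, Fin.val_mk]; omega),
    pp i ⟨k2, by omega⟩ (by simp only [Ne, Fin.ext_iff, Fin.val_mk]; omega),
    pp i ⟨k3, by omega⟩ (by simp only [Ne, Fin.ext_iff, Fin.val_mk]; omega),
    hb ⟨jj, hjj.1⟩, ⟨?_, ?_, ?_, ?_, ?_, ?_⟩, ?_, ?_, ?_, ?_⟩
  · simp only [Ne, pp_eq_pp_iff, Fin.ext_iff, Fin.val_mk]; omega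
  · simp only [Ne, pp_eq_pp_iff, Fin.ext_iff, Fin.val_mk]; omega
  · exact Ne.symm hb_ne_pp
  · simp only [Ne, pp_eq_pp_iff, Fin.ext_iff, Fin.val_mk]; omega
  · exact Ne.symm hb_ne_pp
  · exact Ne.symm hb_ne_pp
  · exact ((adj_hb_pp _ _ _ _).mpr (Or.inl rfl)).symm
  · exact ((adj_hb_pp _ _ _ _).mpr (Or.inl rfl)).symm
  · exact ((adj_hb_pp _ _ _ _).mpr (Or.inl rfl)).symm
  · exact (adj_hb_hb _ _).mpr (by simp only [Fin.val_mk]; omega)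

lemma four_nbrs_pp_lt (hn : 4 ≤ n) (i j : Fin n) (hij : i.val < j.val) (hne : i ≠ j)
    (hL : pp i j hne ≠ cL hn) (hR : pp i j hne ≠ cR hn) : FourNbrs (pp i j hne) := by
  by_cases hadj : j.val = i.val + 1
  · -- adjacent pair, not a corner
    have hi0 : i.val ≠ 0 ∨ j.val ≠ 1 := by
      by_contra hc
      push_neg at hc
      exact hL (by simp only [cL, pp_eq_pp_iff, Fin.ext_iff, Fin.val_mk]; omega)
    have hjn : i.val ≠ n-2 ∨ j.val ≠ n-1 := by
      by_contra hc
      push_neg at hc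
      exact hR (by simp only [cR, pp_eq_pp_iff, Fin.ext_iff, Fin.val_mk]; omega)
    have hi1 : 1 ≤ i.val := by omega
    have hj2 : j.val ≤ n - 2 := by
      have := j.isLt
      omega
    refine ⟨hb i, hb j,
      pp ⟨i.val - 1, by omega⟩ j (by simp only [Ne, Fin.ext_iff, Fin.val_mk]; omega),
      pp i ⟨j.val + 1, by omega⟩ (by simp only [Ne, Fin.ext_iff, Fin.val_mk]; omega),
      ⟨?_, ?_, ?_, ?_, ?_, ?_⟩, ?_, ?_, ?_, ?_⟩
    · simp only [Ne, hb_inj, Fin.ext_iff]; omega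
    · exact hb_ne_pp
    · exact hb_ne_pp
    · exact hb_ne_pp
    · exact hb_ne_pp
    · simp only [Ne, pp_eq_pp_iff, Fin.ext_iff, Fin.val_mk]; omega
    · exact (adj_hb_pp _ _ _ _).mpr (Or.inl rfl)
    · exact (adj_hb_pp _ _ _ _).mpr (Or.inr rfl)
    · exact (adj_pp_pp _ _ _ _ _ _).mpr (Or.inr <| Or.inr <| Or.inr
        ⟨rfl, Or.inl (by first | (simp only [Fin.val_mk]; omega) | simp only [Fin.val_mk] | omega)⟩)
    · exact (adj_pp_pp _ _ _ _ _ _).mpr (Or.inl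
        ⟨rfl, Or.inr (by first | (simp only [Fin.val_mk]; omega) | simp only [Fin.val_mk] | omega)⟩)
  · -- non-adjacent pair
    have hgap : i.val + 1 < j.val := by omega
    refine ⟨hb i, hb j,
      pp i ⟨j.val - 1, by omega⟩ (by simp only [Ne, Fin.ext_iff, Fin.val_mk]; omega),
      pp ⟨i.val + 1, by omega⟩ j (by simp only [Ne, Fin.ext_iff, Fin.val_mk]; omega),
      ⟨?_, ?_, ?_, ?_, ?_, ?_⟩, ?_, ?_, ?_, ?_⟩
    · simp only [Ne, hb_inj, Fin.ext_iff]; omega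
    · exact hb_ne_pp
    · exact hb_ne_pp
    · exact hb_ne_pp
    · exact hb_ne_pp
    · simp only [Ne, pp_eq_pp_iff, Fin.ext_iff, Fin.val_mk]; omega
    · exact (adj_hb_pp _ _ _ _).mpr (Or.inl rfl)
    · exact (adj_hb_pp _ _ _ _).mpr (Or.inr rfl)
    · exact (adj_pp_pp _ _ _ _ _ _).mpr (Or.inl
        ⟨rfl, Or.inl (by first | (simp only [Fin.val_mk]; omega) | simp only [Fin.val_mk] | omega)⟩)
    · exact (adj_pp_pp _ _ _ _ _ _).mpr (Or.inr <| Or.inr <| Or.inr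
        ⟨rfl, Or.inr (by first | (simp only [Fin.val_mk]; omega) | simp only [Fin.val_mk] | omega)⟩)

lemma four_nbrs (hn : 4 ≤ n) (A : V2 n) (hL : A ≠ cL hn) (hR : A ≠ cR hn) :
    FourNbrs A := by
  rcases V2_cases A with ⟨i, rfl⟩ | ⟨i, j, hne, rfl⟩
  · exact four_nbrs_hb hn i
  · rcases Nat.lt_or_ge i.val j.val with h | h
    · exact four_nbrs_pp_lt hn i j h hne hL hR
    · have hlt : j.val < i.val := by
        rcases Nat.lt_or_ge j.val i.val with h' | h'
        · exact h'
        · exact absurd (Fin.ext (by omega)) hne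
      rw [pp_comm] at hL hR ⊢
      exact four_nbrs_pp_lt hn j i hlt (Ne.symm hne) hL hR

/-- Any automorphism sends the left corner to a corner. -/
lemma g_cL (hn : 4 ≤ n) (g : TG n ≃g TG n) :
    g (cL hn) = cL hn ∨ g (cL hn) = cR hn := by
  by_contra hc
  push_neg at hc
  obtain ⟨B1, B2, B3, B4, ⟨h12, h13, h14, h23, h24, h34⟩, ha1, ha2, ha3, ha4⟩ :=
    four_nbrs hn (g (cL hn)) hc.1 hc.2
  have pull : ∀ B : V2 n, (TG n).Adj B (g (cL hn)) → (TG n).Adj (g.symm B) (cL hn) := by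
    intro B hB
    have : (TG n).Adj (g (g.symm B)) (g (cL hn)) := by
      rwa [RelIso.apply_symm_apply]
    exact g.map_rel_iff.mp this
  have inj : Function.Injective g.symm := g.symm.toEquiv.injective
  exact pigeon (fun h => h12 (inj h)) (fun h => h13 (inj h)) (fun h => h14 (inj h))
    (fun h => h23 (inj h)) (fun h => h24 (inj h)) (fun h => h34 (inj h))
    (nbr_cL hn (pull _ ha1)) (nbr_cL hn (pull _ ha2))
    (nbr_cL hn (pull _ ha3)) (nbr_cL hn (pull _ ha4))

/-- Any automorphism sends the right corner to a corner. -/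
lemma g_cR (hn : 4 ≤ n) (g : TG n ≃g TG n) :
    g (cR hn) = cL hn ∨ g (cR hn) = cR hn := by
  by_contra hc
  push_neg at hc
  obtain ⟨B1, B2, B3, B4, ⟨h12, h13, h14, h23, h24, h34⟩, ha1, ha2, ha3, ha4⟩ :=
    four_nbrs hn (g (cR hn)) hc.1 hc.2
  have pull : ∀ B : V2 n, (TG n).Adj B (g (cR hn)) → (TG n).Adj (g.symm B) (cR hn) := by
    intro B hB
    have : (TG n).Adj (g (g.symm B)) (g (cR hn)) := by
      rwa [RelIso.apply_symm_apply]
    exact g.map_rel_iff.mp this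
  have inj : Function.Injective g.symm := g.symm.toEquiv.injective
  exact pigeon (fun h => h12 (inj h)) (fun h => h13 (inj h)) (fun h => h14 (inj h))
    (fun h => h23 (inj h)) (fun h => h24 (inj h)) (fun h => h34 (inj h))
    (nbr_cR hn (pull _ ha1)) (nbr_cR hn (pull _ ha2))
    (nbr_cR hn (pull _ ha3)) (nbr_cR hn (pull _ ha4))

/-! ### The induced automorphism on the token graph -/

/-- The permutation of `V2 n` induced by an automorphism of the fan. -/
def indEquiv (θ : fanGraph n ≃g fanGraph n) : V2 n ≃ V2 n where
  toFun A := ⟨A.val.image θ, by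
    rw [Finset.card_image_of_injective _ θ.injective, A.2]⟩
  invFun A := ⟨A.val.image θ.symm, by
    rw [Finset.card_image_of_injective _ θ.symm.injective, A.2]⟩
  left_inv A := by
    apply Subtype.ext
    show (A.val.image ⇑θ).image ⇑θ.symm = A.val
    rw [Finset.image_image]
    have hid : ⇑θ.symm ∘ ⇑θ = id := funext fun x => θ.symm_apply_apply x
    rw [hid, Finset.image_id]
  right_inv A := by
    apply Subtype.ext
    show (A.val.image ⇑θ.symm).image ⇑θ = A.val
    rw [Finset.image_image]
    have hid : ⇑θ ∘ ⇑θ.symm = id := funext fun x => θ.apply_symm_apply x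
    rw [hid, Finset.image_id]

lemma indEquiv_val (θ : fanGraph n ≃g fanGraph n) (A : V2 n) :
    (indEquiv θ A).val = A.val.image θ := rfl

lemma image_symmDiff' (θ : fanGraph n ≃g fanGraph n) (s t : Finset (Option (Fin n))) :
    (s ∆ t).image θ = (s.image θ) ∆ (t.image θ) :=
  Finset.image_symmDiff s t θ.toEquiv.injective

lemma indEquiv_adj (θ : fanGraph n ≃g fanGraph n) (A B : V2 n)
    (h : (TG n).Adj A B) : (TG n).Adj (indEquiv θ A) (indEquiv θ B) := by
  obtain ⟨a, b, hab, hd⟩ := h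
  refine ⟨θ a, θ b, ?_, ?_⟩
  · exact θ.map_rel_iff.mpr hab
  · rw [indEquiv_val, indEquiv_val, ← image_symmDiff', hd]
    simp

/-- The induced graph automorphism of the token graph. -/
def indMap (θ : fanGraph n ≃g fanGraph n) : TG n ≃g TG n where
  toEquiv := indEquiv θ
  map_rel_iff' := by
    intro A B
    constructor
    · intro h
      have := indEquiv_adj θ.symm _ _ h
      have he : ∀ C : V2 n, indEquiv θ.symm (indEquiv θ C) = C := by
        intro C
        apply Subtype.ext
        rw [indEquiv_val, indEquiv_val, Finset.image_image]
        have hid : ⇑θ.symm ∘ ⇑θ = id := funext fun x => θ.symm_apply_apply x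
        rw [hid, Finset.image_id]
      rwa [he, he] at this
    · exact indEquiv_adj θ A B

/-- The induced map as a monoid homomorphism. -/
def indHom : (fanGraph n ≃g fanGraph n) →* (TG n ≃g TG n) :=
  MonoidHom.mk' (fun θ => indMap θ) (by
    intro θ₁ θ₂
    apply RelIso.ext
    intro A
    apply Subtype.ext
    show A.val.image (fun x => θ₁ (θ₂ x)) = (A.val.image θ₂).image θ₁
    rw [Finset.image_image]
    rfl)

lemma indHom_val (θ : fanGraph n ≃g fanGraph n) (A : V2 n) :
    ((indHom θ) A).val = A.val.image θ := rfl

lemma indHom_injective (hn : 4 ≤ n) : Function.Injective (indHom (n := n)) := by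
  intro θ₁ θ₂ h
  have key : ∀ A : V2 n, A.val.image θ₁ = A.val.image θ₂ := by
    intro A
    have := congrArg (fun f => (f A).val) h
    exact this
  apply RelIso.ext
  intro x
  -- pick two elements distinct from x and from each other
  obtain ⟨a, b, hxa, hxb, hab⟩ : ∃ a b : Option (Fin n),
      x ≠ a ∧ x ≠ b ∧ a ≠ b := by
    match x with
    | none => exact ⟨some ⟨0, by omega⟩, some ⟨1, by omega⟩, by simp, by simp,
        by simp only [Ne, Option.some_inj, Fin.mk.injEq]; omega⟩
    | some i => exact ⟨none, some ⟨if i.val = 0 then 1 else 0, by split_ifs <;> omega⟩, by simp, by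
        simp only [Ne, Option.some_inj]
        intro hcon
        have := congrArg Fin.val hcon
        simp only [Fin.val_mk] at this
        split_ifs at this <;> omega, by simp⟩
  have mem1 : θ₁ x ∈ ({x, a} : Finset (Option (Fin n))).image θ₁ := by
    apply Finset.mem_image_of_mem; simp
  have mem2 : θ₁ x ∈ ({x, b} : Finset (Option (Fin n))).image θ₁ := by
    apply Finset.mem_image_of_mem; simp
  rw [key ⟨{x, a}, Finset.card_pair hxa⟩] at mem1
  rw [key ⟨{x, b}, Finset.card_pair hxb⟩] at mem2
  simp only [Finset.mem_image, Finset.mem_insert, Finset.mem_singleton] at mem1 mem2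
  -- θ₁ x is in image θ₂ of both pairs
  obtain ⟨y1, hy1, he1⟩ := mem1
  obtain ⟨y2, hy2, he2⟩ := mem2
  have hinj := θ₂.toEquiv.injective
  rcases hy1 with rfl | rfl <;> rcases hy2 with rfl | rfl
  · exact he1.symm
  · exact he1.symm
  · exact he2.symm
  · exfalso
    exact hab (hinj (he1.trans he2.symm))

/-! ### The reversal automorphism of the fan -/

def revFan (n : ℕ) : fanGraph n ≃g fanGraph n where
  toEquiv := Equiv.optionCongr (Fin.revPerm)
  map_rel_iff' := by
    intro a b
    match a, b with
    | none, none => simp [fan_adj_iff]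
    | none, some j => simp only [Equiv.optionCongr_apply, Option.map_none, Option.map_some]
                      constructor
                      · intro _; exact fan_adj_none_some j
                      · intro _; exact fan_adj_none_some _
    | some i, none => simp only [Equiv.optionCongr_apply, Option.map_none, Option.map_some]
                      constructor
                      · intro _; exact fan_adj_some_none i
                      · intro _; exact fan_adj_some_none _
    | some i, some j =>
        simp only [Equiv.optionCongr_apply, Option.map_some]
        rw [fan_adj_some_some, fan_adj_some_some]
        simp only [Fin.revPerm_apply, Fin.val_rev]
        have hi := i.isLt
        have hj := j.isLt
        omega

lemma rev_val (i : Fin n) : ((revFan n) (some i) : Option (Fin n)) = some i.rev := rfl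

lemma revFan_cL (hn : 4 ≤ n) : (indHom (revFan n)) (cL hn) = cR hn := by
  apply Subtype.ext
  rw [indHom_val]
  show ({some ⟨0, _⟩, some ⟨1, _⟩} : Finset (Option (Fin n))).image (revFan n) = _
  rw [Finset.image_insert, Finset.image_singleton, rev_val, rev_val]
  have h1 : (⟨0, by omega⟩ : Fin n).rev = ⟨n-1, by omega⟩ :=
    Fin.ext (by rw [Fin.val_rev] <;> simp only [Fin.val_mk] <;> omega)
  have h2 : (⟨1, by omega⟩ : Fin n).rev = ⟨n-2, by omega⟩ :=
    Fin.ext (by rw [Fin.val_rev] <;> simp only [Fin.val_mk] <;> omega)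
  rw [h1, h2, Finset.pair_comm]
  rfl

lemma revFan_cR (hn : 4 ≤ n) : (indHom (revFan n)) (cR hn) = cL hn := by
  apply Subtype.ext
  rw [indHom_val]
  show ({some ⟨n-2, _⟩, some ⟨n-1, _⟩} : Finset (Option (Fin n))).image (revFan n) = _
  rw [Finset.image_insert, Finset.image_singleton, rev_val, rev_val]
  have h1 : (⟨n-2, by omega⟩ : Fin n).rev = ⟨1, by omega⟩ :=
    Fin.ext (by rw [Fin.val_rev] <;> simp only [Fin.val_mk] <;> omega)
  have h2 : (⟨n-1, by omega⟩ : Fin n).rev = ⟨0, by omega⟩ :=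
    Fin.ext (by rw [Fin.val_rev] <;> simp only [Fin.val_mk] <;> omega)
  rw [h1, h2, Finset.pair_comm]
  rfl

lemma common_H0_H1 (hn : 4 ≤ n) (B : V2 n)
    (h0 : (TG n).Adj B (hb ⟨0, by omega⟩)) (h1 : (TG n).Adj B (hb ⟨1, by omega⟩)) :
    B = cL hn := by
  rcases nbr_hb h0 with ⟨j, hpj, hBj⟩ | ⟨j, hj, hBj⟩
  · -- B = hb j with padj 0 j, and hb j ~ hb 1
    rw [hBj, adj_hb_hb] at h1
    exfalso
    rcases hpj with hpj | hpj <;> rcases h1 with h1 | h1 <;>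
      simp only [Fin.val_mk] at hpj h1 <;> omega
  · -- B = pp ⟨0⟩ j, adjacent to hb 1 : j = 1
    rw [hBj, SimpleGraph.adj_comm, adj_hb_pp] at h1
    rcases h1 with h1 | h1
    · exfalso
      have := congrArg Fin.val h1
      simp only [Fin.val_mk] at this
      omega
    · rw [hBj, cL, pp_eq_pp_iff]
      exact Or.inl ⟨rfl, h1.symm⟩

lemma fix_all (hn : 4 ≤ n) (g : TG n ≃g TG n) (hcL : g (cL hn) = cL hn) :
    ∀ A : V2 n, g A = A := by
  have ginj : Function.Injective g := g.toEquiv.injective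
  have trans1 : ∀ {u v : V2 n}, g u = u → (TG n).Adj v u → (TG n).Adj (g v) u := by
    intro u v hu h
    rw [← hu]
    exact g.map_rel_iff.mpr h
  -- names
  have hcR : g (cR hn) = cR hn := by
    rcases g_cR hn g with h | h
    · exact absurd (ginj (h.trans hcL.symm)) (fun hc => cL_ne_cR hn (hc ▸ rfl))
    · exact h
  -- neighbours of cL
  have aH0 : (TG n).Adj (hb ⟨0, by omega⟩) (cL hn) :=
    (adj_hb_pp _ _ _ _).mpr (Or.inl rfl)
  have aH1 : (TG n).Adj (hb ⟨1, by omega⟩) (cL hn) :=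
    (adj_hb_pp _ _ _ _).mpr (Or.inr rfl)
  have aP02 : (TG n).Adj
      (pp ⟨0, by omega⟩ ⟨2, by omega⟩ (by simp only [Ne, Fin.mk.injEq]; omega)) (cL hn) :=
    (adj_pp_pp _ _ _ _ _ _).mpr (Or.inl ⟨rfl, Or.inr (by simp only [Fin.val_mk])⟩)
  have m0 := nbr_cL hn (trans1 hcL aH0)
  have m1 := nbr_cL hn (trans1 hcL aH1)
  have m2 := nbr_cL hn (trans1 hcL aP02)
  have hne01 : (hb ⟨0, by omega⟩ : V2 n) ≠ hb ⟨1, by omega⟩ := by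
    simp only [Ne, hb_inj, Fin.mk.injEq]; omega
  have adjH0H1 : (TG n).Adj (hb ⟨0, by omega⟩ : V2 n) (hb ⟨1, by omega⟩) :=
    (adj_hb_hb _ _).mpr (Or.inl (by simp only [Fin.val_mk]))
  have adjH0P02 : (TG n).Adj (hb ⟨0, by omega⟩ : V2 n)
      (pp ⟨0, by omega⟩ ⟨2, by omega⟩ (by simp only [Ne, Fin.mk.injEq]; omega)) :=
    (adj_hb_pp _ _ _ _).mpr (Or.inl rfl)
  have nadjH1P02 : ¬ (TG n).Adj (hb ⟨1, by omega⟩ : V2 n)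
      (pp ⟨0, by omega⟩ ⟨2, by omega⟩ (by simp only [Ne, Fin.mk.injEq]; omega)) := by
    rw [adj_hb_pp]
    rintro (h | h) <;> (have := congrArg Fin.val h; simp only [Fin.val_mk] at this; omega)
  -- step 1 : g H0 = H0
  have hH0 : g (hb ⟨0, by omega⟩) = hb ⟨0, by omega⟩ := by
    rcases m0 with e0 | e0 | e0
    · exact e0
    · exfalso
      rcases m1 with e1 | e1 | e1
      · rcases m2 with e2 | e2 | e2
        · exact hb_ne_pp (ginj (e1.trans e2.symm))
        · exact hb_ne_pp (ginj (e0.trans e2.symm))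
        · have := g.map_rel_iff.mpr adjH0P02
          rw [e0, e2] at this
          exact nadjH1P02 this
      · exact hne01 (ginj (e0.trans e1.symm))
      · have := g.map_rel_iff.mpr adjH0H1
        rw [e0, e1] at this
        exact nadjH1P02 this
    · exfalso
      rcases m1 with e1 | e1 | e1
      · rcases m2 with e2 | e2 | e2
        · exact hb_ne_pp (ginj (e1.trans e2.symm))
        · have := g.map_rel_iff.mpr adjH0P02
          rw [e0, e2] at this
          exact nadjH1P02 this.symm
        · exact hb_ne_pp (ginj (e0.trans e2.symm))
      · rcases m2 with e2 | e2 | e2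
        · have := g.map_rel_iff.mpr adjH0H1
          rw [e0, e1] at this
          exact nadjH1P02 this.symm
        · exact hb_ne_pp (ginj (e2.trans e1.symm)).symm
        · exact hb_ne_pp (ginj (e0.trans e2.symm))
      · exact hne01 (ginj (e0.trans e1.symm))
  -- step 2 : g H1 = H1
  have hH1 : g (hb ⟨1, by omega⟩) = hb ⟨1, by omega⟩ := by
    rcases m1 with e1 | e1 | e1
    · exact absurd (ginj (e1.trans hH0.symm)).symm hne01
    · exact e1
    · exfalso
      -- the p03 trick
      have aWH0 : (TG n).Adj
          (pp ⟨0, by omega⟩ ⟨3, by omega⟩ (by simp only [Ne, Fin.mk.injEq]; omega))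
          (hb ⟨0, by omega⟩) :=
        ((adj_hb_pp _ _ _ _).mpr (Or.inl rfl)).symm
      have aWP02 : (TG n).Adj
          (pp ⟨0, by omega⟩ ⟨3, by omega⟩ (by simp only [Ne, Fin.mk.injEq]; omega))
          (pp ⟨0, by omega⟩ ⟨2, by omega⟩ (by simp only [Ne, Fin.mk.injEq]; omega)) :=
        (adj_pp_pp _ _ _ _ _ _).mpr
          (Or.inl ⟨rfl, Or.inr (by simp only [Fin.val_mk])⟩)
      set W : V2 n := pp ⟨0, by omega⟩ ⟨3, by omega⟩
        (by simp only [Ne, Fin.mk.injEq]; omega) with hW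
      set B : V2 n := g.symm W with hB
      have hgB : g B = W := by rw [hB, RelIso.apply_symm_apply]
      have hBH0 : (TG n).Adj B (hb ⟨0, by omega⟩) := by
        have : (TG n).Adj (g B) (g (hb ⟨0, by omega⟩)) := by
          rw [hgB, hH0]
          exact aWH0
        exact g.map_rel_iff.mp this
      have hBH1 : (TG n).Adj B (hb ⟨1, by omega⟩) := by
        have : (TG n).Adj (g B) (g (hb ⟨1, by omega⟩)) := by
          rw [hgB, e1]
          exact aWP02
        exact g.map_rel_iff.mp this
      have hBc : B = cL hn := common_H0_H1 hn B hBH0 hBH1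
      have : W = cL hn := by rw [← hgB, hBc, hcL]
      rw [hW, cL, pp_eq_pp_iff] at this
      rcases this with ⟨h1, h2⟩ | ⟨h1, h2⟩ <;>
        (have := congrArg Fin.val h2; simp only [Fin.val_mk] at this; omega)
  -- step 3 : g P02 = P02
  have hP02 : g (pp ⟨0, by omega⟩ ⟨2, by omega⟩ (by simp only [Ne, Fin.mk.injEq]; omega))
      = pp ⟨0, by omega⟩ ⟨2, by omega⟩ (by simp only [Ne, Fin.mk.injEq]; omega) := by
    rcases m2 with e2 | e2 | e2
    · exact absurd (ginj (e2.trans hH0.symm)) (Ne.symm hb_ne_pp)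
    · exact absurd (ginj (e2.trans hH1.symm)) (Ne.symm hb_ne_pp)
    · exact e2
  -- step 4 : all pairs pp 0 k are fixed (induction along the path)
  have FixP : ∀ k : ℕ, ∀ (hk : k < n) (h1k : 1 ≤ k)
      (hnk : (⟨0, by omega⟩ : Fin n) ≠ ⟨k, hk⟩),
      g (pp ⟨0, by omega⟩ ⟨k, hk⟩ hnk) = pp ⟨0, by omega⟩ ⟨k, hk⟩ hnk := by
    intro k
    induction k using Nat.strong_induction_on with
    | _ k ih =>
      intro hk h1k hnk
      by_cases hk1 : k = 1
      · subst hk1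
        exact hcL
      by_cases hk2 : k = 2
      · subst hk2
        exact hP02
      have hk3 : 3 ≤ k := by omega
      have aAH0 : (TG n).Adj (pp ⟨0, by omega⟩ ⟨k, hk⟩ hnk) (hb ⟨0, by omega⟩) :=
        ((adj_hb_pp _ _ _ _).mpr (Or.inl rfl)).symm
      have s1 := trans1 hH0 aAH0
      rcases nbr_hb s1 with ⟨j, hpj, e⟩ | ⟨m, hm, e⟩
      · exfalso
        have hj1 : j = ⟨1, by omega⟩ := by
          apply Fin.ext
          rcases hpj with hpj | hpj <;> simp only [Fin.val_mk] at hpj ⊢ <;> omega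
        rw [hj1] at e
        have := ginj (e.trans hH1.symm)
        exact (Ne.symm hb_ne_pp) this
      · -- e : g A = pp 0 m
        have hnk' : (⟨0, by omega⟩ : Fin n) ≠ ⟨k-1, by omega⟩ := by
          simp only [Ne, Fin.mk.injEq]; omega
        have prev := ih (k-1) (by omega) (by omega) (by omega) hnk'
        have aA : (TG n).Adj (pp ⟨0, by omega⟩ ⟨k, hk⟩ hnk)
            (pp ⟨0, by omega⟩ ⟨k-1, by omega⟩ hnk') :=
          (adj_pp_pp _ _ _ _ _ _).mpr
            (Or.inl ⟨rfl, Or.inr (by simp only [Fin.val_mk]; omega)⟩)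
        have s2 := trans1 prev aA
        rw [e, adj_pp_pp] at s2
        rcases s2 with ⟨_, hp⟩ | ⟨hq, _⟩ | ⟨hq, _⟩ | ⟨hq, hp⟩
        · rcases hp with hp | hp
          · -- m = k - 2 : contradiction with injectivity
            exfalso
            have hm2 : m = ⟨k-2, Nat.lt_of_le_of_lt (Nat.sub_le k 2) hk⟩ := by
              apply Fin.ext
              simp only [Fin.val_mk] at hp ⊢
              omega
            have hnk'' : (⟨0, by omega⟩ : Fin n) ≠ ⟨k-2, by omega⟩ := by
              simp only [Ne, Fin.mk.injEq]; omega
            have prev2 := ih (k-2) (by omega) (by omega) (by omega) hnk''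
            subst hm2
            have := ginj (e.trans prev2.symm)
            rw [pp_eq_pp_iff] at this
            rcases this with ⟨h1, h2⟩ | ⟨h1, h2⟩ <;>
              (first
                | (have := congrArg Fin.val h2; simp only [Fin.val_mk] at this; omega)
                | (have := congrArg Fin.val h1; simp only [Fin.val_mk] at this; omega))
          · -- m = k : done
            have hmk : m = ⟨k, hk⟩ := by
              apply Fin.ext
              simp only [Fin.val_mk] at hp ⊢
              omega
            subst hmk
            exact e
        · exfalso
          have := congrArg Fin.val hq
          simp only [Fin.val_mk] at this
          omega
        · exact absurd hq.symm hm
        · exfalso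
          rcases hp with hp | hp <;> simp only [Fin.val_mk] at hp <;> omega
  -- step 5 : hubs k >= 3 are fixed
  have FixH3 : ∀ k : ℕ, ∀ (hk : k < n), 3 ≤ k → g (hb ⟨k, hk⟩) = hb ⟨k, hk⟩ := by
    intro k hk h3
    have hnk : (⟨0, by omega⟩ : Fin n) ≠ ⟨k, hk⟩ := by
      simp only [Ne, Fin.mk.injEq]; omega
    have pfix := FixP k hk (by omega) hnk
    have aA : (TG n).Adj (hb ⟨k, hk⟩) (pp ⟨0, by omega⟩ ⟨k, hk⟩ hnk) :=
      (adj_hb_pp _ _ _ _).mpr (Or.inr rfl)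
    have s1 := trans1 pfix aA
    rcases nbr_pp s1 with e | e | ⟨m, hm, hpm, e⟩ | ⟨m, hm, hpm, e⟩
    · exfalso
      have := ginj (e.trans hH0.symm)
      rw [hb_inj] at this
      have := congrArg Fin.val this
      simp only [Fin.val_mk] at this
      omega
    · exact e
    · exfalso
      have h1m : 1 ≤ m.val := by
        rcases hpm with hp | hp <;> simp only [Fin.val_mk] at hp <;> omega
      have pfix2 : g (pp ⟨0, by omega⟩ m hm) = pp ⟨0, by omega⟩ m hm :=
        FixP m.val m.isLt h1m hm
      have := ginj (e.trans pfix2.symm)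
      exact hb_ne_pp this
    · exfalso
      have hm1 : m = ⟨1, by omega⟩ := by
        apply Fin.ext
        rcases hpm with hp | hp <;> simp only [Fin.val_mk] at hp ⊢ <;> omega
      have aP : (TG n).Adj (pp ⟨k, hk⟩ m hm) (hb ⟨1, by omega⟩) :=
        ((adj_hb_pp _ _ _ _).mpr (Or.inr hm1.symm)).symm
      have s2 : (TG n).Adj (g (hb ⟨k, hk⟩)) (g (hb ⟨1, by omega⟩)) := by
        rw [e, hH1]
        exact aP
      have s3 := g.map_rel_iff.mp s2
      rw [adj_hb_hb] at s3
      rcases s3 with h | h <;> simp only [Fin.val_mk] at h <;> omega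
  -- step 6 : hub 2 is fixed
  have FixH2 : g (hb ⟨2, by omega⟩) = hb ⟨2, by omega⟩ := by
    have hnk : (⟨0, by omega⟩ : Fin n) ≠ ⟨2, by omega⟩ := by
      simp only [Ne, Fin.mk.injEq]; omega
    have pfix := FixP 2 (by omega) (by omega) hnk
    have aA : (TG n).Adj (hb ⟨2, by omega⟩) (pp ⟨0, by omega⟩ ⟨2, by omega⟩ hnk) :=
      (adj_hb_pp _ _ _ _).mpr (Or.inr rfl)
    have s1 := trans1 pfix aA
    rcases nbr_pp s1 with e | e | ⟨m, hm, hpm, e⟩ | ⟨m, hm, hpm, e⟩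
    · exfalso
      have := ginj (e.trans hH0.symm)
      rw [hb_inj] at this
      have := congrArg Fin.val this
      simp only [Fin.val_mk] at this <;> omega
    · exact e
    · exfalso
      have h1m : 1 ≤ m.val := by
        rcases hpm with hp | hp <;> simp only [Fin.val_mk] at hp <;> omega
      have pfix2 : g (pp ⟨0, by omega⟩ m hm) = pp ⟨0, by omega⟩ m hm :=
        FixP m.val m.isLt h1m hm
      have := ginj (e.trans pfix2.symm)
      exact hb_ne_pp this
    · exfalso
      have hm1 : m = ⟨1, by omega⟩ := by
        apply Fin.ext
        rcases hpm with hp | hp <;> simp only [Fin.val_mk] at hp ⊢ <;> omega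
      have h3fix := FixH3 3 (by omega) (by omega)
      have aH2H3 : (TG n).Adj (hb ⟨2, by omega⟩ : V2 n) (hb ⟨3, by omega⟩) :=
        (adj_hb_hb _ _).mpr (Or.inl (by simp only [Fin.val_mk]))
      have s2 := trans1 h3fix aH2H3
      rw [e] at s2
      have := (adj_hb_pp _ _ _ _).mp s2.symm
      rcases this with h | h
      · have := congrArg Fin.val h
        simp only [Fin.val_mk] at this <;> omega
      · rw [hm1] at h
        have := congrArg Fin.val h
        simp only [Fin.val_mk] at this <;> omega
  -- step 7 : all hubs fixed
  have FixH : ∀ i : Fin n, g (hb i) = hb i := by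
    intro i
    by_cases h0 : i.val = 0
    · have hi : i = ⟨0, by omega⟩ := Fin.ext h0
      rw [hi]
      exact hH0
    by_cases h1 : i.val = 1
    · have hi : i = ⟨1, by omega⟩ := Fin.ext h1
      rw [hi]
      exact hH1
    by_cases h2 : i.val = 2
    · have hi : i = ⟨2, by omega⟩ := Fin.ext h2
      rw [hi]
      exact FixH2
    · exact FixH3 i.val i.isLt (by omega)
  -- step 8 : all pairs fixed
  have FixPP : ∀ (i j : Fin n) (hij : i ≠ j), g (pp i j hij) = pp i j hij := by
    intro i j hij
    have aI : (TG n).Adj (pp i j hij) (hb i) :=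
      ((adj_hb_pp _ _ _ _).mpr (Or.inl rfl)).symm
    have aJ : (TG n).Adj (pp i j hij) (hb j) :=
      ((adj_hb_pp _ _ _ _).mpr (Or.inr rfl)).symm
    have s1 := trans1 (FixH i) aI
    rcases nbr_hb s1 with ⟨jj, hpjj, e⟩ | ⟨m, hm, e⟩
    · exfalso
      exact hb_ne_pp (ginj (e.trans (FixH jj).symm)).symm
    · have s2 := trans1 (FixH j) aJ
      rw [e] at s2
      have := (adj_hb_pp _ _ _ _).mp s2.symm
      rcases this with h | h
      · exact absurd h.symm hij
      · have hmj : m = j := h.symm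
        subst hmj
        exact e
  -- conclusion
  intro A
  rcases V2_cases A with ⟨i, rfl⟩ | ⟨i, j, hij, rfl⟩
  · exact FixH i
  · exact FixPP i j hij

lemma classify (hn : 4 ≤ n) (g : TG n ≃g TG n) :
    g = 1 ∨ g = indHom (revFan n) := by
  rcases g_cL hn g with h | h
  · left
    apply RelIso.ext
    intro A
    exact fix_all hn g h A
  · right
    have key : (indHom (revFan n))⁻¹ * g = 1 := by
      apply RelIso.ext
      intro A
      apply fix_all hn
      show (indHom (revFan n))⁻¹ (g (cL hn)) = cL hn
      rw [h]
      have : (indHom (revFan n)) (cL hn) = cR hn := revFan_cL hn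
      calc (indHom (revFan n))⁻¹ (cR hn)
          = (indHom (revFan n))⁻¹ ((indHom (revFan n)) (cL hn)) := by rw [this]
        _ = cL hn := by
            show (indHom (revFan n)).symm ((indHom (revFan n)) (cL hn)) = cL hn
            exact RelIso.symm_apply_apply _ _
    exact (inv_mul_eq_one.mp key).symm

lemma NR_ne_one (hn : 4 ≤ n) : (indHom (revFan n) : TG n ≃g TG n) ≠ 1 := by
  intro hcon
  have h1 : (indHom (revFan n)) (cL hn) = cR hn := revFan_cL hn
  rw [hcon] at h1
  exact cL_ne_cR hn h1

end Main

end Tok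

/-- For `n ≥ 4`, every automorphism of `F_2(A_{1,n})` is induced by an automorphism of the
fan `A_{1,n}`: the group homomorphism `θ ↦ f_θ` (where `f_θ(A) = θ '' A`) is a group
isomorphism from `Aut(A_{1,n})` to `Aut(F_2(A_{1,n}))`; in particular
`|Aut(F_2(A_{1,n}))| = 2`. -/
theorem stmt_5 (n : ℕ) (hn : 4 ≤ n) :
    (∃ φ : (fanGraph n ≃g fanGraph n) ≃*
        (tokenGraph (fanGraph n) 2 ≃g tokenGraph (fanGraph n) 2),
      ∀ (θ : fanGraph n ≃g fanGraph n) (A : {s : Finset (Option (Fin n)) // s.card = 2}),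
        ((φ θ) A).val = A.val.image θ) ∧
    Nat.card (tokenGraph (fanGraph n) 2 ≃g tokenGraph (fanGraph n) 2) = 2 := by
  constructor
  · -- the isomorphism
    have hbij : Function.Bijective (Tok.indHom (n := n)) := by
      constructor
      · exact Tok.indHom_injective hn
      · intro g
        rcases Tok.classify hn g with h | h
        · exact ⟨1, by rw [map_one, h]⟩
        · exact ⟨Tok.revFan n, h.symm⟩
    refine ⟨MulEquiv.ofBijective _ hbij, ?_⟩
    intro θ A
    rfl
  · rw [Nat.card_eq_two_iff]
    refine ⟨1, Tok.indHom (Tok.revFan n), (Tok.NR_ne_one hn).symm, ?_⟩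
    rw [Set.eq_univ_iff_forall]
    intro g
    simp only [Set.mem_insert_iff, Set.mem_singleton_iff]
    rcases Tok.classify hn g with h | h
    · exact Or.inl h
    · exact Or.inr h
end

section
/- Let n ≥ 6 be an integer. Then the subgraph of F_2(C_n) induced by the vertex set L_1 ∪ L_2 is isomorphic to the cycle graph C_{2n}. -/
open scoped symmDiff

/-- `Lset n q` is the family `L_q` of 2-element subsets `{i, i ⊕ q}` of `Fin n`,
where `⊕` is addition modulo `n`. -/
def Lset (n : ℕ) [NeZero n] (q : ℕ) : Finset (Finset (Fin n)) :=
  Finset.univ.image fun i : Fin n => ({i, i + Fin.ofNat n q} : Finset (Fin n))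

namespace Stmt15Aux

open Finset SimpleGraph
open Fin.NatCast Fin.CommRing

variable {n : ℕ} [NeZero n]

lemma modsmall {N a : ℕ} (h1 : 1 ≤ N) (ha : a ≤ N + N - 1) :
    a % N = if a < N then a else a - N := by
  split_ifs with h
  · exact Nat.mod_eq_of_lt h
  · rw [Nat.mod_eq_sub_mod (le_of_not_gt h), Nat.mod_eq_of_lt (by omega)]

lemma cast_cases {a b : ℕ} (ha : a ≤ n + n - 1) (hb : b ≤ n + n - 1)
    (h : (a : Fin n) = (b : Fin n)) : a = b ∨ a = b + n ∨ b = a + n := by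
  have h1 : a % n = b % n := by simpa using congrArg Fin.val h
  have hn1 : 1 ≤ n := Nat.one_le_iff_ne_zero.2 (NeZero.ne n)
  rw [modsmall hn1 ha, modsmall hn1 hb] at h1
  split_ifs at h1 <;> omega

lemma cast_ne_cast (hn : 6 ≤ n) {a b : ℕ} (ha : a ≤ 5) (hb : b ≤ 5) (hab : a ≠ b) :
    (a : Fin n) ≠ (b : Fin n) := by
  intro h
  rcases cast_cases (by omega) (by omega) h with h | h | h <;> omega

lemma cast_sub_eq_one (hn : 6 ≤ n) {a b : ℕ} (ha : a ≤ 4) (hb : b ≤ 4)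
    (h : (a : Fin n) - (b : Fin n) = 1) : a = b + 1 := by
  rw [sub_eq_iff_eq_add] at h
  have h2 : (a : Fin n) = ((b + 1 : ℕ) : Fin n) := by rw [h]; push_cast; ring
  rcases cast_cases (by omega) (by omega) h2 with h | h | h <;> omega

lemma pair_eq {α : Type*} [DecidableEq α] {a b x y : α} (hab : a ≠ b)
    (h : ({a, b} : Finset α) = {x, y}) : (a = x ∧ b = y) ∨ (a = y ∧ b = x) := by
  have ha : a = x ∨ a = y := by
    have : a ∈ ({a, b} : Finset α) := by simp
    rw [h] at this; simpa using this
  have hb : b = x ∨ b = y := by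
    have : b ∈ ({a, b} : Finset α) := by simp
    rw [h] at this; simpa using this
  rcases ha with rfl | rfl <;> rcases hb with h1 | h1 <;> simp_all

lemma sd_pair {α : Type*} [DecidableEq α] {c a b : α} (hac : a ≠ c) (hbc : b ≠ c)
    (hab : a ≠ b) : ({c, a} : Finset α) ∆ {c, b} = {a, b} := by
  ext x
  simp only [Finset.mem_symmDiff, Finset.mem_insert, Finset.mem_singleton]
  constructor
  · tauto
  · rintro (rfl | rfl) <;> tauto

lemma three_pigeon {α : Type*} {x y a b c : α} (ha : a = x ∨ a = y) (hb : b = x ∨ b = y)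
    (hc : c = x ∨ c = y) (hab : a ≠ b) (hac : a ≠ c) (hbc : b ≠ c) : False := by
  rcases ha with rfl | rfl <;> rcases hb with rfl | rfl <;> rcases hc with rfl | rfl <;> tauto

lemma pm1 {p q x y : Fin n} (hpq : p ≠ q) (h : ({p, q} : Finset (Fin n)) = {x, y})
    (hxy : x - y = 1 ∨ y - x = 1) : p - q = 1 ∨ q - p = 1 := by
  rcases pair_eq hpq h with ⟨rfl, rfl⟩ | ⟨rfl, rfl⟩ <;> tauto

lemma cycle_adj_val {M : ℕ} [NeZero M] (hM : 3 ≤ M) (u v : Fin M) :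
    (cycleGraph M).Adj u v ↔ (u.val + 1 = v.val ∨ v.val + 1 = u.val ∨
      (u.val = M - 1 ∧ v.val = 0) ∨ (v.val = M - 1 ∧ u.val = 0)) := by
  have hu := u.isLt
  have hv := v.isLt
  rw [cycleGraph_adj']
  simp only [Fin.sub_def]
  rw [modsmall (by omega) (by omega), modsmall (by omega) (by omega)]
  split_ifs <;> omega

lemma adj_iff_sub (hn : 6 ≤ n) {u v : Fin n} :
    (cycleGraph n).Adj u v ↔ u - v = 1 ∨ v - u = 1 := by
  rw [cycleGraph_adj']
  have h1 : (1 : Fin n).val = 1 := by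
    rw [Fin.val_one']; exact Nat.mod_eq_of_lt (by omega)
  rw [show ((u - v).val = 1) = (u - v = 1) from by rw [Fin.ext_iff, h1],
      show ((v - u).val = 1) = (v - u = 1) from by rw [Fin.ext_iff, h1]]

lemma key (hn : 6 ≤ n) {dn en : ℕ} (hd : dn = 1 ∨ dn = 2) (he : en = 1 ∨ en = 2)
    {i j x y : Fin n} (hxy : x - y = 1 ∨ y - x = 1)
    (h : ({i, i + (dn : Fin n)} : Finset (Fin n)) ∆ ({j, j + (en : Fin n)} : Finset (Fin n))
      = {x, y}) :
    dn ≠ en ∧ (i = j ∨ i + (dn : Fin n) = j + (en : Fin n)) := by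
  have hd0 : (dn : Fin n) ≠ 0 := by
    have := cast_ne_cast (n := n) hn (a := dn) (b := 0) (by omega) (by omega) (by omega)
    simpa using this
  have he0 : (en : Fin n) ≠ 0 := by
    have := cast_ne_cast (n := n) hn (a := en) (b := 0) (by omega) (by omega) (by omega)
    simpa using this
  have hiid : i ≠ i + (dn : Fin n) := by
    intro hc; exact hd0 (by simpa using ((add_eq_left).1 hc.symm))
  have hjje : j ≠ j + (en : Fin n) := by
    intro hc; exact he0 (by simpa using ((add_eq_left).1 hc.symm))
  by_cases hij : i = j
  · subst hij
    by_cases hde : (dn : Fin n) = (en : Fin n)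
    · rw [hde, symmDiff_self] at h
      simp at h
      exact absurd h.symm (Finset.insert_ne_empty _ _)
    · have hsd := sd_pair (c := i) (a := i + (dn : Fin n)) (b := i + (en : Fin n))
        hiid.symm hjje.symm (fun hc => hde (by simpa using hc))
      rw [hsd] at h
      rcases pm1 (fun hc => hde (by simpa using hc)) h hxy with h1 | h1
      · have h2 : (dn : Fin n) - (en : Fin n) = 1 := by
          rw [← h1]; abel
        have := cast_sub_eq_one hn (by omega) (by omega) h2
        exact ⟨by omega, Or.inl rfl⟩
      · have h2 : (en : Fin n) - (dn : Fin n) = 1 := by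
          rw [← h1]; abel
        have := cast_sub_eq_one hn (by omega) (by omega) h2
        exact ⟨by omega, Or.inl rfl⟩
  · by_cases h2 : i + (dn : Fin n) = j + (en : Fin n)
    · rw [← h2, Finset.pair_comm i (i + (dn : Fin n)),
        Finset.pair_comm j (i + (dn : Fin n))] at h
      rw [sd_pair hiid (h2 ▸ hjje) hij] at h
      have hdiff := pm1 hij h hxy
      have h3 : i - j = (en : Fin n) - (dn : Fin n) := by
        rw [sub_eq_sub_iff_add_eq_add, h2]; ring
      rcases hdiff with h1 | h1
      · rw [h3] at h1
        have := cast_sub_eq_one hn (by omega) (by omega) h1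
        exact ⟨by omega, Or.inr h2⟩
      · have h5 : j - i = (dn : Fin n) - (en : Fin n) := by
          have := congrArg Neg.neg h3
          simpa [neg_sub] using this
        rw [h5] at h1
        have := cast_sub_eq_one hn (by omega) (by omega) h1
        exact ⟨by omega, Or.inr h2⟩
    · exfalso
      by_cases h3 : j = i + (dn : Fin n)
      · subst h3
        have hne1 : i ≠ i + (dn : Fin n) + (en : Fin n) := by
          intro hc
          have : ((dn + en : ℕ) : Fin n) = ((0 : ℕ) : Fin n) := by
            push_cast
            have := ((add_eq_left).1 (by rw [add_assoc] at hc; exact hc.symm))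
            simpa using this
          exact cast_ne_cast hn (by omega) (by omega) (by omega) this
        rw [Finset.pair_comm i (i + (dn : Fin n))] at h
        rw [sd_pair hiid (Ne.symm hjje) hne1] at h
        rcases pm1 hne1 h hxy with h1 | h1
        · have h4 : ((0 : ℕ) : Fin n) - ((dn + en : ℕ) : Fin n) = 1 := by
            push_cast
            rw [← h1]; abel
          have := cast_sub_eq_one hn (by omega) (by omega) h4
          omega
        · have h4 : ((dn + en : ℕ) : Fin n) - ((0 : ℕ) : Fin n) = 1 := by
            push_cast
            rw [← h1]; abel
          have := cast_sub_eq_one hn (by omega) (by omega) h4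
          omega
      · by_cases h4 : j + (en : Fin n) = i
        · have hj : j = i - (en : Fin n) := eq_sub_of_add_eq h4
          subst hj
          have hne1 : i + (dn : Fin n) ≠ i - (en : Fin n) := fun hc => h3 hc.symm
          rw [Finset.pair_comm (i - (en : Fin n)) (i - (en : Fin n) + (en : Fin n)),
            sub_add_cancel] at h
          rw [sd_pair hiid.symm (fun hc => hij hc.symm) hne1] at h
          rcases pm1 hne1 h hxy with h1 | h1
          · have h5 : ((dn + en : ℕ) : Fin n) - ((0 : ℕ) : Fin n) = 1 := by
              push_cast
              rw [← h1]; abel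
            have := cast_sub_eq_one hn (by omega) (by omega) h5
            omega
          · have h5 : ((0 : ℕ) : Fin n) - ((dn + en : ℕ) : Fin n) = 1 := by
              push_cast
              rw [← h1]; abel
            have := cast_sub_eq_one hn (by omega) (by omega) h5
            omega
        · have m1 : i ∈ ({x, y} : Finset (Fin n)) := by
            rw [← h, Finset.mem_symmDiff]
            refine Or.inl ⟨by simp, ?_⟩
            simp only [Finset.mem_insert, Finset.mem_singleton, not_or]
            exact ⟨hij, fun hc => h4 hc.symm⟩
          have m2 : i + (dn : Fin n) ∈ ({x, y} : Finset (Fin n)) := by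
            rw [← h, Finset.mem_symmDiff]
            refine Or.inl ⟨by simp, ?_⟩
            simp only [Finset.mem_insert, Finset.mem_singleton, not_or]
            exact ⟨fun hc => h3 hc.symm, fun hc => h2 hc⟩
          have m3 : j ∈ ({x, y} : Finset (Fin n)) := by
            rw [← h, Finset.mem_symmDiff]
            refine Or.inr ⟨by simp, ?_⟩
            simp only [Finset.mem_insert, Finset.mem_singleton, not_or]
            exact ⟨fun hc => hij hc.symm, fun hc => h3 hc⟩
          simp only [Finset.mem_insert, Finset.mem_singleton] at m1 m2 m3
          exact three_pigeon m1 m2 m3 hiid (fun hc => hij hc) (fun hc => h3 hc.symm)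

/-- The vertex assignment: `j ↦ {j/2, j/2 + 1 + (j % 2)}`. -/
def ptd (n : ℕ) [NeZero n] (j : Fin (2 * n)) : Finset (Fin n) :=
  {((j.val / 2 : ℕ) : Fin n), ((j.val / 2 : ℕ) : Fin n) + ((1 + j.val % 2 : ℕ) : Fin n)}

lemma self_ne_add (hn : 6 ≤ n) {i : Fin n} {d : ℕ} (h1 : 1 ≤ d) (h2 : d ≤ 5) :
    i ≠ i + (d : Fin n) := by
  intro hc
  have hd0 : (d : Fin n) = ((0 : ℕ) : Fin n) := by
    simpa using (add_eq_left).1 hc.symm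
  exact cast_ne_cast hn h2 (by omega) (by omega) hd0

lemma ptd_card (hn : 6 ≤ n) (j : Fin (2 * n)) : (ptd n j).card = 2 :=
  Finset.card_pair (self_ne_add (d := 1 + j.val % 2) hn (by omega) (by omega))

lemma ptd_mem (hn : 6 ≤ n) (j : Fin (2 * n)) : ptd n j ∈ Lset n 1 ∪ Lset n 2 := by
  rcases Nat.mod_two_eq_zero_or_one j.val with h | h
  · apply Finset.mem_union_left
    rw [Lset, Finset.mem_image]
    exact ⟨((j.val / 2 : ℕ) : Fin n), Finset.mem_univ _, by rw [ptd, h]; rfl⟩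
  · apply Finset.mem_union_right
    rw [Lset, Finset.mem_image]
    exact ⟨((j.val / 2 : ℕ) : Fin n), Finset.mem_univ _, by rw [ptd, h]; rfl⟩

lemma adj_add (hn : 6 ≤ n) (A : Fin n) {p q : ℕ} (hpq : q = p + 1) (hq : q ≤ 5) :
    (cycleGraph n).Adj (A + (p : Fin n)) (A + (q : Fin n)) := by
  rw [adj_iff_sub hn]
  right
  subst hpq
  push_cast
  abel

lemma ptd_inj (hn : 6 ≤ n) {j1 j2 : Fin (2 * n)} (h : ptd n j1 = ptd n j2) : j1 = j2 := by
  have h1 := j1.isLt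
  have h2 := j2.isLt
  rcases pair_eq (self_ne_add (d := 1 + j1.val % 2) hn (by omega) (by omega)) h with ⟨e1, e2⟩ | ⟨e1, e2⟩
  · have e1' := cast_cases (a := j1.val / 2) (b := j2.val / 2) (by omega) (by omega) e1
    have e2'' : ((j1.val / 2 + (1 + j1.val % 2) : ℕ) : Fin n)
        = ((j2.val / 2 + (1 + j2.val % 2) : ℕ) : Fin n) := by push_cast at e2 ⊢; exact e2
    have e2' := cast_cases (by omega) (by omega) e2''
    apply Fin.ext
    omega
  · have e1'' : ((j1.val / 2 : ℕ) : Fin n)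
        = ((j2.val / 2 + (1 + j2.val % 2) : ℕ) : Fin n) := by push_cast at e1 ⊢; exact e1
    have e2'' : ((j1.val / 2 + (1 + j1.val % 2) : ℕ) : Fin n)
        = ((j2.val / 2 : ℕ) : Fin n) := by push_cast at e2 ⊢; exact e2
    have e1' := cast_cases (by omega) (by omega) e1''
    have e2' := cast_cases (by omega) (by omega) e2''
    omega

lemma tok_succ (hn : 6 ≤ n) {u v : Fin (2 * n)}
    (h : u.val + 1 = v.val ∨ (u.val = 2 * n - 1 ∧ v.val = 0)) :
    ∃ x y : Fin n, (cycleGraph n).Adj x y ∧ ptd n u ∆ ptd n v = {x, y} := by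
  have hu := u.isLt
  have hv := v.isLt
  rcases Nat.mod_two_eq_zero_or_one u.val with hpar | hpar
  · -- u even: no wraparound possible
    have hv1 : v.val = u.val + 1 := by omega
    have e1 : 1 + u.val % 2 = 1 := by omega
    have e2 : 1 + v.val % 2 = 2 := by omega
    have e3 : v.val / 2 = u.val / 2 := by omega
    refine ⟨((u.val / 2 : ℕ) : Fin n) + ((1 : ℕ) : Fin n),
      ((u.val / 2 : ℕ) : Fin n) + ((2 : ℕ) : Fin n), adj_add hn _ rfl (by omega), ?_⟩
    rw [ptd, ptd, e1, e2, e3]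
    exact sd_pair (Ne.symm (self_ne_add (d := 1) hn (by omega) (by omega)))
      (Ne.symm (self_ne_add (d := 2) hn (by omega) (by omega)))
      (fun hc => cast_ne_cast hn (a := 1) (b := 2) (by omega) (by omega) (by omega)
        (add_left_cancel hc))
  · -- u odd
    have e1 : 1 + u.val % 2 = 2 := by omega
    have e2 : 1 + v.val % 2 = 1 := by omega
    have hB : ((v.val / 2 : ℕ) : Fin n) = ((u.val / 2 + 1 : ℕ) : Fin n) := by
      rcases h with h | h
      · rw [show v.val / 2 = u.val / 2 + 1 by omega]
      · rw [show v.val / 2 = 0 by omega, show u.val / 2 + 1 = n by omega]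
        simp [Fin.natCast_self]
    have hB' : ((v.val / 2 : ℕ) : Fin n) = ((u.val / 2 : ℕ) : Fin n) + ((1 : ℕ) : Fin n) := by
      rw [hB]; push_cast; ring
    refine ⟨((u.val / 2 : ℕ) : Fin n),
      ((u.val / 2 : ℕ) : Fin n) + ((1 : ℕ) : Fin n), ?_, ?_⟩
    · have := adj_add hn ((u.val / 2 : ℕ) : Fin n) (p := 0) (q := 1) rfl (by omega)
      simpa using this
    · have hc2 : ((u.val / 2 : ℕ) : Fin n) + ((1 : ℕ) : Fin n) + ((1 : ℕ) : Fin n)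
          = ((u.val / 2 : ℕ) : Fin n) + ((2 : ℕ) : Fin n) := by
        rw [add_assoc]
        norm_num
      rw [ptd, ptd, e1, e2, hB', hc2,
        Finset.pair_comm (((u.val / 2 : ℕ) : Fin n)) _,
        Finset.pair_comm (((u.val / 2 : ℕ) : Fin n) + ((1 : ℕ) : Fin n)) _]
      exact sd_pair (self_ne_add (d := 2) hn (by omega) (by omega))
        (fun hc => cast_ne_cast hn (a := 1) (b := 2) (by omega) (by omega) (by omega)
          (add_left_cancel hc))
        (self_ne_add (d := 1) hn (by omega) (by omega))

end Stmt15Aux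

open SimpleGraph in
/-- For `n ≥ 6`, the subgraph of `F_2(C_n)` induced by `L_1 ∪ L_2` is isomorphic to the
cycle `C_{2n}`. -/
theorem stmt_15 (n : ℕ) [NeZero n] (hn : 6 ≤ n) :
    Nonempty ((SimpleGraph.induce
        {A : {s : Finset (Fin n) // s.card = 2} | A.val ∈ Lset n 1 ∪ Lset n 2}
        (tokenGraph (cycleGraph n) 2)) ≃g cycleGraph (2 * n)) := by
  open Stmt15Aux Fin.NatCast Fin.CommRing in
  haveI : NeZero (2 * n) := ⟨by omega⟩
  set S : Set {s : Finset (Fin n) // s.card = 2} :=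
    {A : {s : Finset (Fin n) // s.card = 2} | A.val ∈ Lset n 1 ∪ Lset n 2} with hS
  let f : Fin (2 * n) → S := fun j => ⟨⟨ptd n j, ptd_card hn j⟩, ptd_mem hn j⟩
  have hinj : Function.Injective f := by
    intro j1 j2 hf
    exact ptd_inj hn (congrArg (fun A => A.val.val) hf)
  have hsurj : Function.Surjective f := by
    rintro ⟨⟨s, hs⟩, hmem⟩
    rw [hS, Set.mem_setOf_eq] at hmem
    rcases Finset.mem_union.1 hmem with hm | hm <;>
      obtain ⟨i, -, rfl⟩ := Finset.mem_image.1 hm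
    · refine ⟨⟨2 * i.val, by omega⟩, ?_⟩
      apply Subtype.ext; apply Subtype.ext
      show ptd n ⟨2 * i.val, _⟩ = _
      rw [ptd]
      simp only []
      rw [show (2 * i.val) / 2 = i.val by omega, show (2 * i.val) % 2 = 0 by omega]
      rw [Fin.cast_val_eq_self]
      rfl
    · refine ⟨⟨2 * i.val + 1, by omega⟩, ?_⟩
      apply Subtype.ext; apply Subtype.ext
      show ptd n ⟨2 * i.val + 1, _⟩ = _
      rw [ptd]
      simp only []
      rw [show (2 * i.val + 1) / 2 = i.val by omega, show (2 * i.val + 1) % 2 = 1 by omega]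
      rw [Fin.cast_val_eq_self]
      rfl
  have hrel : ∀ a b : Fin (2 * n),
      (SimpleGraph.induce S (tokenGraph (cycleGraph n) 2)).Adj (f a) (f b) ↔
        (cycleGraph (2 * n)).Adj a b := by
    intro a b
    have ha := a.isLt
    have hb := b.isLt
    constructor
    · rintro ⟨x, y, hxy, hsd⟩
      replace hxy := (adj_iff_sub hn).1 hxy
      have hsd' : ({((a.val / 2 : ℕ) : Fin n),
            ((a.val / 2 : ℕ) : Fin n) + ((1 + a.val % 2 : ℕ) : Fin n)} : Finset (Fin n)) ∆
          ({((b.val / 2 : ℕ) : Fin n),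
            ((b.val / 2 : ℕ) : Fin n) + ((1 + b.val % 2 : ℕ) : Fin n)} : Finset (Fin n))
          = {x, y} := hsd
      obtain ⟨hne, hcase⟩ := key hn (dn := 1 + a.val % 2) (en := 1 + b.val % 2)
        (by omega) (by omega) hxy hsd'
      rw [cycle_adj_val (by omega)]
      rcases hcase with hc | hc
      · rcases cast_cases (a := a.val / 2) (b := b.val / 2) (by omega) (by omega) hc
          with h | h | h <;> omega
      · have hc' : ((a.val / 2 + (1 + a.val % 2) : ℕ) : Fin n)
            = ((b.val / 2 + (1 + b.val % 2) : ℕ) : Fin n) := by push_cast at hc ⊢; exact hc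
        rcases cast_cases (by omega) (by omega) hc' with h | h | h <;> omega
    · intro hadj
      rw [cycle_adj_val (by omega)] at hadj
      rcases hadj with h | h | h | h
      · exact tok_succ hn (Or.inl h)
      · obtain ⟨x, y, h1, h2⟩ := tok_succ hn (u := b) (v := a) (Or.inl h)
        exact ⟨x, y, h1, by rwa [symmDiff_comm]⟩
      · exact tok_succ hn (Or.inr ⟨h.1, h.2⟩)
      · obtain ⟨x, y, h1, h2⟩ := tok_succ hn (u := b) (v := a) (Or.inr ⟨h.1, h.2⟩)
        exact ⟨x, y, h1, by rwa [symmDiff_comm]⟩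
  exact ⟨(SimpleGraph.Iso.symm
    { toEquiv := Equiv.ofBijective f ⟨hinj, hsurj⟩,
      map_rel_iff' := fun {a b} => hrel a b })⟩
end

section
/- Let n ≥ 2 and 1 ≤ k ≤ n−1 be integers, and let u and v be vertices of F_k(P_n). Write u = {u_1, …, u_k} and v = {v_1, …, v_k} with u_1 < u_2 < … < u_k and v_1 < v_2 < … < v_k. Then the graph distance between u and v in F_k(P_n) equals Σ_{i=1}^{k} |v_i − u_i|. -/
open scoped symmDiff

namespace Stmt17Aux

open Finset

variable {n : ℕ}

/-- Number of elements of `A` with value `≤ t`, as an integer. -/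
def cnt (A : Finset (Fin n)) (t : ℕ) : ℤ :=
  ((A.filter (fun x : Fin n => (x : ℕ) ≤ t)).card : ℤ)

lemma cnt_nonneg (A : Finset (Fin n)) (t : ℕ) : 0 ≤ cnt A t := Int.natCast_nonneg _

lemma cnt_mono (A : Finset (Fin n)) {s t : ℕ} (h : s ≤ t) : cnt A s ≤ cnt A t := by
  unfold cnt
  have : A.filter (fun x : Fin n => (x : ℕ) ≤ s) ⊆ A.filter (fun x : Fin n => (x : ℕ) ≤ t) := by
    apply monotone_filter_right
    intro x _ hx
    exact le_trans hx h
  exact_mod_cast card_le_card this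

/-- The potential function. -/
def phi (A B : Finset (Fin n)) : ℤ := ∑ t ∈ Finset.range n, |cnt A t - cnt B t|

lemma phi_nonneg (A B : Finset (Fin n)) : 0 ≤ phi A B :=
  Finset.sum_nonneg fun _ _ => abs_nonneg _

lemma phi_comm (A B : Finset (Fin n)) : phi A B = phi B A := by
  unfold phi; exact Finset.sum_congr rfl fun t _ => abs_sub_comm _ _

lemma phi_self (A : Finset (Fin n)) : phi A A = 0 := by
  unfold phi; simp

lemma cnt_insert_erase {A : Finset (Fin n)} {a b : Fin n} (ha : a ∈ A) (hb : b ∉ A) (t : ℕ) :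
    cnt (insert b (A.erase a)) t
      = cnt A t + (if (b : ℕ) ≤ t then 1 else 0) - (if (a : ℕ) ≤ t then 1 else 0) := by
  unfold cnt
  rw [filter_insert, filter_erase]
  have hbe : b ∉ (A.filter (fun x : Fin n => (x : ℕ) ≤ t)).erase a := by
    intro h; exact hb (mem_of_mem_filter _ (mem_of_mem_erase h))
  by_cases hbt : (b : ℕ) ≤ t <;> by_cases hat : (a : ℕ) ≤ t
  · have haf : a ∈ A.filter (fun x : Fin n => (x : ℕ) ≤ t) := mem_filter.2 ⟨ha, hat⟩
    rw [if_pos hbt, card_insert_of_notMem hbe, card_erase_of_mem haf, if_pos hbt, if_pos hat]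
    have : 1 ≤ (A.filter (fun x : Fin n => (x : ℕ) ≤ t)).card := card_pos.2 ⟨a, haf⟩
    push_cast [Nat.sub_add_cancel this]
    omega
  · have haf : a ∉ A.filter (fun x : Fin n => (x : ℕ) ≤ t) := fun h => hat (mem_filter.1 h).2
    rw [if_pos hbt, card_insert_of_notMem hbe, erase_eq_of_notMem haf, if_pos hbt, if_neg hat]
    push_cast; ring
  · have haf : a ∈ A.filter (fun x : Fin n => (x : ℕ) ≤ t) := mem_filter.2 ⟨ha, hat⟩
    rw [if_neg hbt, card_erase_of_mem haf, if_neg hbt, if_pos hat]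
    have : 1 ≤ (A.filter (fun x : Fin n => (x : ℕ) ≤ t)).card := card_pos.2 ⟨a, haf⟩
    push_cast [Nat.sub_add_cancel this]
    omega
  · have haf : a ∉ A.filter (fun x : Fin n => (x : ℕ) ≤ t) := fun h => hat (mem_filter.1 h).2
    rw [if_neg hbt, erase_eq_of_notMem haf, if_neg hbt, if_neg hat]
    push_cast; ring

lemma card_insert_erase {A : Finset (Fin n)} {a b : Fin n} (ha : a ∈ A) (hb : b ∉ A) :
    (insert b (A.erase a)).card = A.card := by
  have hbe : b ∉ A.erase a := fun h => hb (mem_of_mem_erase h)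
  rw [card_insert_of_notMem hbe, card_erase_of_mem ha,
    Nat.sub_add_cancel (card_pos.2 ⟨a, ha⟩)]

lemma symmDiff_insert_erase {A : Finset (Fin n)} {a b : Fin n} (ha : a ∈ A) (hb : b ∉ A)
    (hab : a ≠ b) : A ∆ (insert b (A.erase a)) = {a, b} := by
  ext x
  simp only [Finset.mem_symmDiff, mem_insert, mem_erase, Finset.mem_singleton]
  by_cases hxa : x = a <;> by_cases hxb : x = b <;> subst_vars <;> tauto


lemma sum_step (N p : ℕ) (hp : p ≤ N) :
    ∑ t ∈ Finset.range N, (if p ≤ t then (1 : ℤ) else 0) = (N : ℤ) - p := by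
  rw [Finset.sum_boole]
  have : (Finset.range N).filter (fun t => p ≤ t) = Finset.Ico p N := by
    ext t; simp [Finset.mem_range, Finset.mem_Ico]; omega
  simp [this, Nat.card_Ico]
  omega

lemma sum_ind_le (N p q : ℕ) (hp : p ≤ N) (hq : q ≤ N) :
    ∑ t ∈ Finset.range N, |(if p ≤ t then (1 : ℤ) else 0) - (if q ≤ t then 1 else 0)|
      = |(p : ℤ) - q| := by
  rcases le_total q p with h | h
  · have h1 : ∀ t ∈ Finset.range N,
        |(if p ≤ t then (1 : ℤ) else 0) - (if q ≤ t then 1 else 0)|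
          = (if q ≤ t then (1 : ℤ) else 0) - (if p ≤ t then 1 else 0) := by
      intro t _
      by_cases h1 : p ≤ t <;> by_cases h2 : q ≤ t <;> simp [h1, h2] <;> omega
    rw [Finset.sum_congr rfl h1, Finset.sum_sub_distrib, sum_step N q hq, sum_step N p hp]
    have : |(p : ℤ) - q| = (p : ℤ) - q := abs_of_nonneg (by omega)
    omega
  · have h1 : ∀ t ∈ Finset.range N,
        |(if p ≤ t then (1 : ℤ) else 0) - (if q ≤ t then 1 else 0)|
          = (if p ≤ t then (1 : ℤ) else 0) - (if q ≤ t then 1 else 0) := by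
      intro t _
      by_cases h1 : p ≤ t <;> by_cases h2 : q ≤ t <;> simp [h1, h2] <;> omega
    rw [Finset.sum_congr rfl h1, Finset.sum_sub_distrib, sum_step N q hq, sum_step N p hp]
    have : |(p : ℤ) - q| = (q : ℤ) - p := by rw [abs_sub_comm]; exact abs_of_nonneg (by omega)
    omega

lemma sum_ind_lt (N p q : ℕ) (hp : p ≤ N) (hq : q ≤ N) :
    ∑ t ∈ Finset.range N, |(if t < p then (1 : ℤ) else 0) - (if t < q then 1 else 0)|
      = |(p : ℤ) - q| := by
  rw [← sum_ind_le N p q hp hq]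
  apply Finset.sum_congr rfl
  intro t _
  have e1 : ∀ m : ℕ, (if t < m then (1 : ℤ) else 0) = 1 - (if m ≤ t then 1 else 0) := by
    intro m
    rcases le_or_gt m t with h | h
    · rw [if_neg (not_lt.2 h), if_pos h]; ring
    · rw [if_pos h, if_neg (not_le.2 h)]; ring
  rw [e1 p, e1 q,
    show (1 - (if p ≤ t then (1 : ℤ) else 0)) - (1 - (if q ≤ t then 1 else 0))
      = (if q ≤ t then (1 : ℤ) else 0) - (if p ≤ t then 1 else 0) by ring,
    abs_sub_comm]

lemma exists_cnt_ne {A B : Finset (Fin n)} (hAB : A ≠ B) :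
    ∃ t, t < n ∧ cnt A t ≠ cnt B t := by
  have hne : (A ∆ B).Nonempty := by
    rw [Finset.nonempty_iff_ne_empty]
    intro h
    rw [← Finset.bot_eq_empty] at h
    exact hAB (symmDiff_eq_bot.mp h)
  set x := (A ∆ B).min' hne with hxdef
  have hxmem : x ∈ A ∆ B := Finset.min'_mem _ _
  have hmin : ∀ y : Fin n, y < x → (y ∈ A ↔ y ∈ B) := by
    intro y hy
    have : y ∉ A ∆ B := fun hmem => absurd (Finset.min'_le _ _ hmem) (not_le.2 hy)
    rw [Finset.mem_symmDiff] at this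
    tauto
  refine ⟨(x : ℕ), x.isLt, ?_⟩
  rw [Finset.mem_symmDiff] at hxmem
  have key : ∀ C D : Finset (Fin n), x ∈ C → x ∉ D → (∀ y : Fin n, y < x → (y ∈ C ↔ y ∈ D)) →
      cnt C (x : ℕ) = cnt D (x : ℕ) + 1 := by
    intro C D hC hD hCD
    have hflt : C.filter (fun y : Fin n => (y : ℕ) ≤ (x : ℕ))
        = insert x (D.filter (fun y : Fin n => (y : ℕ) ≤ (x : ℕ))) := by
      ext y
      simp only [mem_filter, mem_insert]
      constructor
      · rintro ⟨hyC, hyx⟩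
        rcases lt_or_eq_of_le (show y ≤ x from hyx) with h | h
        · exact Or.inr ⟨(hCD y h).1 hyC, hyx⟩
        · exact Or.inl h
      · rintro (rfl | ⟨hyD, hyx⟩)
        · exact ⟨hC, le_refl _⟩
        · rcases lt_or_eq_of_le (show y ≤ x from hyx) with h | h
          · exact ⟨(hCD y h).2 hyD, hyx⟩
          · exact absurd (h ▸ hyD) hD
    have hxnot : x ∉ D.filter (fun y : Fin n => (y : ℕ) ≤ (x : ℕ)) :=
      fun h => hD (mem_of_mem_filter _ h)
    unfold cnt
    rw [hflt, card_insert_of_notMem hxnot]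
    push_cast; ring
  rcases hxmem with ⟨hC, hD⟩ | ⟨hC, hD⟩
  · have := key A B hC hD hmin
    omega
  · have := key B A hC hD (fun y hy => (hmin y hy).symm)
    omega

lemma orient {U W : Finset (Fin n)} (hc : U.card = W.card) {a b : Fin n}
    (hab : a ≠ b) (h : U ∆ W = {a, b}) :
    (a ∈ U ∧ b ∉ U ∧ W = insert b (U.erase a)) ∨
    (b ∈ U ∧ a ∉ U ∧ W = insert a (U.erase b)) := by
  have hmem : ∀ x : Fin n, (x ∈ U ∧ x ∉ W ∨ x ∈ W ∧ x ∉ U) ↔ (x = a ∨ x = b) := by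
    intro x
    rw [← Finset.mem_symmDiff, h]
    simp
  have hUW : U ≠ W := by
    intro hEq
    have := (hmem a).mpr (Or.inl rfl)
    rw [hEq] at this
    tauto
  have hsub : ∀ x : Fin n, x ≠ a → x ≠ b → (x ∈ U ↔ x ∈ W) := by
    intro x hxa hxb
    have := (hmem x)
    tauto
  have ha := (hmem a).mpr (Or.inl rfl)
  have hb := (hmem b).mpr (Or.inr rfl)
  rcases ha with ⟨haU, haW⟩ | ⟨haW, haU⟩ <;> rcases hb with ⟨hbU, hbW⟩ | ⟨hbW, hbU⟩
  · -- both in U, not in W : contradiction by cards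
    exfalso
    have hWU : W ⊆ U := by
      intro x hx
      by_cases hxa : x = a
      · exact absurd (hxa ▸ hx) haW
      by_cases hxb : x = b
      · exact absurd (hxb ▸ hx) hbW
      exact (hsub x hxa hxb).2 hx
    exact hUW ((Finset.eq_of_subset_of_card_le hWU (le_of_eq hc)).symm)
  · left
    refine ⟨haU, hbU, ?_⟩
    have hba : b ≠ a := hab.symm
    ext x
    simp only [mem_insert, mem_erase]
    by_cases hxa : x = a <;> by_cases hxb : x = b <;> subst_vars <;>
      first
      | tauto
      | (have := hsub x hxa hxb; tauto)
  · right
    refine ⟨hbU, haU, ?_⟩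
    have hba : b ≠ a := hab.symm
    ext x
    simp only [mem_insert, mem_erase]
    by_cases hxa : x = a <;> by_cases hxb : x = b <;> subst_vars <;>
      first
      | tauto
      | (have := hsub x hxa hxb; tauto)
  · exfalso
    have hWU : U ⊆ W := by
      intro x hx
      by_cases hxa : x = a
      · exact absurd (hxa ▸ hx) haU
      by_cases hxb : x = b
      · exact absurd (hxb ▸ hx) hbU
      exact (hsub x hxa hxb).1 hx
    exact hUW (Finset.eq_of_subset_of_card_le hWU (ge_of_eq hc))


lemma move {A B : Finset (Fin n)} (hcard : A.card = B.card)
    (ht : ∃ t, cnt B t < cnt A t) :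
    ∃ a b : Fin n, (SimpleGraph.pathGraph n).Adj a b ∧ a ∈ A ∧ b ∉ A ∧
      phi (insert b (A.erase a)) B = phi A B - 1 := by
  classical
  obtain ⟨t, htt⟩ := ht
  -- there is an element of A at which cnt A exceeds cnt B
  have hex0 : ∃ a0 : Fin n, a0 ∈ A ∧ cnt B (a0 : ℕ) < cnt A (a0 : ℕ) := by
    have h0 : (0 : ℤ) < ((A.filter (fun x : Fin n => (x : ℕ) ≤ t)).card : ℤ) :=
      lt_of_le_of_lt (cnt_nonneg B t) htt
    have hfil : (A.filter (fun x : Fin n => (x : ℕ) ≤ t)).Nonempty :=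
      card_pos.1 (by exact_mod_cast h0)
    refine ⟨(A.filter (fun x : Fin n => (x : ℕ) ≤ t)).max' hfil, ?_, ?_⟩
    · exact mem_of_mem_filter _ ((A.filter (fun x : Fin n => (x : ℕ) ≤ t)).max'_mem hfil)
    · have ha0t : ((A.filter (fun x : Fin n => (x : ℕ) ≤ t)).max' hfil : ℕ) ≤ t :=
        (mem_filter.1 ((A.filter (fun x : Fin n => (x : ℕ) ≤ t)).max'_mem hfil)).2
      have e1 : cnt A ((A.filter (fun x : Fin n => (x : ℕ) ≤ t)).max' hfil : ℕ) = cnt A t := by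
        unfold cnt
        congr 2
        ext x
        simp only [mem_filter]
        constructor
        · rintro ⟨hx, hxt⟩; exact ⟨hx, le_trans hxt ha0t⟩
        · rintro ⟨hx, hxt⟩
          exact ⟨hx, Finset.le_max' (A.filter (fun x : Fin n => (x : ℕ) ≤ t)) x
            (mem_filter.2 ⟨hx, hxt⟩)⟩
      exact lt_of_le_of_lt (cnt_mono B ha0t) (e1 ▸ htt)
  -- choose a maximal such element
  have hex : ∃ a : Fin n, a ∈ A ∧ cnt B (a : ℕ) < cnt A (a : ℕ) ∧
      ∀ y : Fin n, y ∈ A → cnt B (y : ℕ) < cnt A (y : ℕ) → (y : ℕ) ≤ (a : ℕ) := by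
    obtain ⟨a0, ha0A, ha0c⟩ := hex0
    have hS : (A.filter (fun x : Fin n => cnt B (x : ℕ) < cnt A (x : ℕ))).Nonempty :=
      ⟨a0, mem_filter.2 ⟨ha0A, ha0c⟩⟩
    have hm := (A.filter (fun x : Fin n => cnt B (x : ℕ) < cnt A (x : ℕ))).max'_mem hS
    rw [mem_filter] at hm
    refine ⟨_, hm.1, hm.2, ?_⟩
    intro y hy hyc
    exact Finset.le_max' (A.filter (fun x : Fin n => cnt B (x : ℕ) < cnt A (x : ℕ))) y
      (mem_filter.2 ⟨hy, hyc⟩)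
  obtain ⟨a, haA, hacnt, hamax⟩ := hex
  -- find an element of B above a, to bound a+1 < n
  have hBfil : (B.filter (fun x : Fin n => ¬ (x : ℕ) ≤ (a : ℕ))).Nonempty := by
    have hA2 := card_filter_add_card_filter_not
      (s := A) (p := fun x : Fin n => (x : ℕ) ≤ (a : ℕ))
    have hB2 := card_filter_add_card_filter_not
      (s := B) (p := fun x : Fin n => (x : ℕ) ≤ (a : ℕ))
    have hcc : (B.filter (fun x : Fin n => (x : ℕ) ≤ (a : ℕ))).card
        < (A.filter (fun x : Fin n => (x : ℕ) ≤ (a : ℕ))).card := by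
      have := hacnt
      unfold cnt at this
      exact_mod_cast this
    rw [← card_pos]
    omega
  obtain ⟨x, hx⟩ := hBfil
  rw [mem_filter, not_le] at hx
  have hbn : (a : ℕ) + 1 < n := by
    have h1 := x.isLt
    have h2 := hx.2
    omega
  have hb : (⟨(a : ℕ) + 1, hbn⟩ : Fin n) ∉ A := by
    intro hbA
    have k1 : cnt A ((a : ℕ) + 1) = cnt A (a : ℕ) + 1 := by
      unfold cnt
      have heq : A.filter (fun y : Fin n => (y : ℕ) ≤ (a : ℕ) + 1)
          = insert ⟨(a : ℕ) + 1, hbn⟩ (A.filter (fun y : Fin n => (y : ℕ) ≤ (a : ℕ))) := by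
        ext y
        simp only [mem_filter, mem_insert]
        constructor
        · rintro ⟨hy, hyb⟩
          by_cases hye : (y : ℕ) = (a : ℕ) + 1
          · exact Or.inl (Fin.ext hye)
          · exact Or.inr ⟨hy, by omega⟩
        · rintro (rfl | ⟨hy, hya⟩)
          · exact ⟨hbA, le_refl _⟩
          · exact ⟨hy, by omega⟩
      rw [heq, card_insert_of_notMem (by
        intro h
        have h2 := (mem_filter.1 h).2
        simp at h2)]
      push_cast; ring
    have k2 : cnt B ((a : ℕ) + 1) ≤ cnt B (a : ℕ) + 1 := by
      unfold cnt
      have hsub : B.filter (fun y : Fin n => (y : ℕ) ≤ (a : ℕ) + 1)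
          ⊆ insert ⟨(a : ℕ) + 1, hbn⟩ (B.filter (fun y : Fin n => (y : ℕ) ≤ (a : ℕ))) := by
        intro y hy
        rw [mem_filter] at hy
        rw [mem_insert]
        by_cases hye : (y : ℕ) = (a : ℕ) + 1
        · exact Or.inl (Fin.ext hye)
        · exact Or.inr (mem_filter.2 ⟨hy.1, by omega⟩)
      have hc1 := card_le_card hsub
      have hc2 := card_insert_le (⟨(a : ℕ) + 1, hbn⟩ : Fin n)
        (B.filter (fun y : Fin n => (y : ℕ) ≤ (a : ℕ)))
      push_cast
      omega
    have := hamax ⟨(a : ℕ) + 1, hbn⟩ hbA (by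
      show cnt B ((a : ℕ) + 1) < cnt A ((a : ℕ) + 1)
      omega)
    simp at this
  refine ⟨a, ⟨(a : ℕ) + 1, hbn⟩, SimpleGraph.pathGraph_adj.mpr (Or.inl rfl), haA, hb, ?_⟩
  have key : ∀ s : ℕ, cnt (insert (⟨(a : ℕ) + 1, hbn⟩ : Fin n) (A.erase a)) s
      = cnt A s - (if s = (a : ℕ) then 1 else 0) := by
    intro s
    rw [cnt_insert_erase haA hb]
    show cnt A s + (if (a : ℕ) + 1 ≤ s then 1 else 0) - (if (a : ℕ) ≤ s then 1 else 0) = _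
    by_cases h2 : s = (a : ℕ)
    · subst h2
      rw [if_neg (by omega), if_pos (le_refl _), if_pos rfl]
      ring
    · by_cases h1 : (a : ℕ) ≤ s
      · rw [if_pos (by omega), if_pos h1, if_neg h2]; ring
      · rw [if_neg (by omega), if_neg h1, if_neg h2]; ring
  have hmem : (a : ℕ) ∈ Finset.range n := mem_range.2 a.isLt
  have hsplit : phi (insert (⟨(a : ℕ) + 1, hbn⟩ : Fin n) (A.erase a)) B
      = ∑ s ∈ Finset.range n, (|cnt A s - cnt B s| - (if s = (a : ℕ) then 1 else 0)) := by
    unfold phi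
    apply Finset.sum_congr rfl
    intro s _
    rw [key s]
    by_cases h2 : s = (a : ℕ)
    · subst h2
      rw [if_pos rfl]
      rw [show cnt A (a : ℕ) - 1 - cnt B (a : ℕ)
          = (cnt A (a : ℕ) - cnt B (a : ℕ)) - 1 by ring]
      rw [abs_of_nonneg (show (0 : ℤ) ≤ cnt A (a : ℕ) - cnt B (a : ℕ) - 1 by omega)]
      rw [abs_of_nonneg (show (0 : ℤ) ≤ cnt A (a : ℕ) - cnt B (a : ℕ) by omega)]
    · rw [if_neg h2]
      simp
  rw [hsplit, Finset.sum_sub_distrib]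
  rw [Finset.sum_ite_eq' (Finset.range n) ((a : ℕ)) (fun _ => (1 : ℤ)), if_pos hmem]
  rfl


lemma step_bound {U W B : Finset (Fin n)} {x y : Fin n} (hx : x ∈ U) (hy : y ∉ U)
    (hd : (x : ℕ) + 1 = (y : ℕ) ∨ (y : ℕ) + 1 = (x : ℕ))
    (hW : W = insert y (U.erase x)) : phi U B ≤ phi W B + 1 := by
  have habs : ∀ s : ℕ, |cnt U s - cnt W s|
      = if s = min (x : ℕ) (y : ℕ) then 1 else 0 := by
    intro s
    rw [hW, cnt_insert_erase hx hy,
      show cnt U s - (cnt U s + (if (y : ℕ) ≤ s then (1 : ℤ) else 0)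
          - (if (x : ℕ) ≤ s then 1 else 0))
        = (if (x : ℕ) ≤ s then (1 : ℤ) else 0) - (if (y : ℕ) ≤ s then 1 else 0) by ring]
    by_cases h1 : (x : ℕ) ≤ s <;> by_cases h2 : (y : ℕ) ≤ s
    · rw [if_pos h1, if_pos h2, if_neg (by omega)]; norm_num
    · rw [if_pos h1, if_neg h2, if_pos (by omega)]; norm_num
    · rw [if_neg h1, if_pos h2, if_pos (by omega)]; norm_num
    · rw [if_neg h1, if_neg h2, if_neg (by omega)]; norm_num
  have hmin : min (x : ℕ) (y : ℕ) ∈ Finset.range n :=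
    mem_range.2 (lt_of_le_of_lt (min_le_left _ _) x.isLt)
  have hsum : ∑ s ∈ Finset.range n, |cnt U s - cnt W s| = 1 := by
    calc ∑ s ∈ Finset.range n, |cnt U s - cnt W s|
        = ∑ s ∈ Finset.range n, (if s = min (x : ℕ) (y : ℕ) then (1 : ℤ) else 0) :=
          Finset.sum_congr rfl fun s _ => habs s
      _ = 1 := by
          rw [Finset.sum_ite_eq' (Finset.range n) _ (fun _ => (1 : ℤ)), if_pos hmin]
  calc phi U B = ∑ s ∈ Finset.range n, |cnt U s - cnt B s| := rfl
    _ ≤ ∑ s ∈ Finset.range n, (|cnt W s - cnt B s| + |cnt U s - cnt W s|) := by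
        apply Finset.sum_le_sum
        intro s _
        have := abs_sub_le (cnt U s) (cnt W s) (cnt B s)
        have h2 : |cnt U s - cnt W s| = |cnt W s - cnt U s| := abs_sub_comm _ _
        calc |cnt U s - cnt B s| ≤ |cnt U s - cnt W s| + |cnt W s - cnt B s| :=
              abs_sub_le _ _ _
          _ = |cnt W s - cnt B s| + |cnt U s - cnt W s| := by ring
    _ = phi W B + 1 := by rw [Finset.sum_add_distrib, hsum]; rfl

lemma lipschitz {U W B : Finset (Fin n)} (hc : U.card = W.card) {p q : Fin n}
    (hadj : (SimpleGraph.pathGraph n).Adj p q) (hsym : U ∆ W = {p, q}) :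
    phi U B ≤ phi W B + 1 := by
  have hd : (p : ℕ) + 1 = (q : ℕ) ∨ (q : ℕ) + 1 = (p : ℕ) :=
    SimpleGraph.pathGraph_adj.mp hadj
  rcases orient hc hadj.ne hsym with ⟨h1, h2, h3⟩ | ⟨h1, h2, h3⟩
  · exact step_bound h1 h2 hd h3
  · exact step_bound h1 h2 (Or.symm (by tauto)) h3

lemma phi_le_length {k : ℕ} (u v : {s : Finset (Fin n) // s.card = k})
    (p : (tokenGraph (SimpleGraph.pathGraph n) k).Walk u v) :
    phi u.val v.val ≤ (p.length : ℤ) := by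
  induction p with
  | nil => simp [phi_self]
  | @cons u w v h p ih =>
    obtain ⟨a, b, hab, hsym⟩ := id h
    have := lipschitz (B := v.val) (u.2.trans w.2.symm) hab hsym
    rw [SimpleGraph.Walk.length_cons]
    push_cast
    omega

lemma exists_walk {k : ℕ} : ∀ (m : ℕ) (u v : {s : Finset (Fin n) // s.card = k}),
    (phi u.val v.val).toNat = m →
    ∃ p : (tokenGraph (SimpleGraph.pathGraph n) k).Walk u v, p.length = m := by
  intro m
  induction m using Nat.strong_induction_on with
  | _ m ih =>
  intro u v hm
  by_cases huv : u = v
  · subst huv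
    refine ⟨SimpleGraph.Walk.nil, ?_⟩
    rw [← hm, phi_self]
    rfl
  · have hvv : u.val ≠ v.val := fun h => huv (Subtype.ext h)
    obtain ⟨t, htn, htne⟩ := exists_cnt_ne hvv
    rcases lt_or_gt_of_ne htne with hlt | hgt
    · -- cnt u t < cnt v t : move a token of v
      obtain ⟨a, b, hadj, haV, hbV, hphi⟩ := move (v.2.trans u.2.symm) ⟨t, hlt⟩
      refine ?_
      set v' : {s : Finset (Fin n) // s.card = k} :=
        ⟨insert b (v.val.erase a), by rw [card_insert_erase haV hbV]; exact v.2⟩ with hv'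
      have hadjT : (tokenGraph (SimpleGraph.pathGraph n) k).Adj v v' :=
        ⟨a, b, hadj, symmDiff_insert_erase haV hbV hadj.ne⟩
      have hphi' : phi u.val v'.val = phi u.val v.val - 1 := by
        rw [phi_comm, show v'.val = insert b (v.val.erase a) from rfl, hphi, phi_comm]
      have h0 := phi_nonneg u.val v'.val
      have h1 := phi_nonneg u.val v.val
      obtain ⟨p, hp⟩ := ih (m - 1) (by omega) u v' (by omega)
      exact ⟨p.concat hadjT.symm, by rw [SimpleGraph.Walk.length_concat, hp]; omega⟩
    · -- cnt v t < cnt u t : move a token of u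
      obtain ⟨a, b, hadj, haU, hbU, hphi⟩ := move (u.2.trans v.2.symm) ⟨t, hgt⟩
      set u' : {s : Finset (Fin n) // s.card = k} :=
        ⟨insert b (u.val.erase a), by rw [card_insert_erase haU hbU]; exact u.2⟩ with hu'
      have hadjT : (tokenGraph (SimpleGraph.pathGraph n) k).Adj u u' :=
        ⟨a, b, hadj, symmDiff_insert_erase haU hbU hadj.ne⟩
      have hphi' : phi u'.val v.val = phi u.val v.val - 1 := by
        rw [show u'.val = insert b (u.val.erase a) from rfl, hphi]
      have h0 := phi_nonneg u'.val v.val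
      have h1 := phi_nonneg u.val v.val
      obtain ⟨p, hp⟩ := ih (m - 1) (by omega) u' v (by omega)
      exact ⟨SimpleGraph.Walk.cons hadjT p, by rw [SimpleGraph.Walk.length_cons, hp]; omega⟩

lemma dist_eq {k : ℕ} (u v : {s : Finset (Fin n) // s.card = k}) :
    (((tokenGraph (SimpleGraph.pathGraph n) k).dist u v : ℕ) : ℤ) = phi u.val v.val := by
  obtain ⟨p, hp⟩ := exists_walk (phi u.val v.val).toNat u v rfl
  have hub := SimpleGraph.dist_le p
  have hreach : (tokenGraph (SimpleGraph.pathGraph n) k).Reachable u v := ⟨p⟩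
  obtain ⟨q, hq⟩ := hreach.exists_walk_length_eq_dist
  have hlb := phi_le_length u v q
  rw [hq] at hlb
  rw [hp] at hub
  have := phi_nonneg u.val v.val
  omega


lemma mem_lower_iff {k : ℕ} (S : Finset (Fin k))
    (hlow : ∀ j ∈ S, ∀ j' : Fin k, j' ≤ j → j' ∈ S) (i : Fin k) :
    i ∈ S ↔ (i : ℕ) < S.card := by
  constructor
  · intro hi
    have hsub : Finset.Iic i ⊆ S := fun j hj => hlow i hi j (Finset.mem_Iic.1 hj)
    have := card_le_card hsub
    rw [Fin.card_Iic] at this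
    omega
  · intro hc
    by_contra hi
    have hsub : S ⊆ Finset.Iio i := by
      intro j hj
      rw [Finset.mem_Iio]
      by_contra hij
      exact hi (hlow j hj i (le_of_not_gt hij))
    have := card_le_card hsub
    rw [Fin.card_Iio] at this
    omega

lemma sorted_le_iff {k : ℕ} (A : Finset (Fin n)) (hA : A.card = k) (i : Fin k) (t : ℕ) :
    ((A.orderEmbOfFin hA i : Fin n) : ℕ) ≤ t
      ↔ (i : ℕ) < (A.filter (fun x : Fin n => (x : ℕ) ≤ t)).card := by
  classical
  set f := A.orderEmbOfFin hA with hf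
  set S : Finset (Fin k) := Finset.univ.filter (fun j : Fin k => ((f j : Fin n) : ℕ) ≤ t)
    with hS
  have hcard : S.card = (A.filter (fun x : Fin n => (x : ℕ) ≤ t)).card := by
    apply Finset.card_bij (fun j _ => f j)
    · intro j hj
      rw [hS, mem_filter] at hj
      exact mem_filter.2 ⟨A.orderEmbOfFin_mem hA j, hj.2⟩
    · intro j1 _ j2 _ h
      exact f.injective h
    · intro x hx
      rw [mem_filter] at hx
      have : x ∈ Set.range f := by rw [hf, A.range_orderEmbOfFin hA]; exact hx.1
      obtain ⟨j, hj⟩ := this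
      exact ⟨j, mem_filter.2 ⟨mem_univ _, by rw [hj]; exact hx.2⟩, hj⟩
  have hlow : ∀ j ∈ S, ∀ j' : Fin k, j' ≤ j → j' ∈ S := by
    intro j hj j' hj'
    rw [hS, mem_filter] at hj ⊢
    refine ⟨mem_univ _, ?_⟩
    have : f j' ≤ f j := f.monotone hj'
    exact le_trans this hj.2
  have hmi : i ∈ S ↔ ((f i : Fin n) : ℕ) ≤ t := by
    rw [hS, mem_filter]
    simp
  rw [← hmi, mem_lower_iff S hlow i, hcard]

lemma phi_eq_sum {k : ℕ} (A B : Finset (Fin n)) (hA : A.card = k) (hB : B.card = k) :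
    phi A B = ∑ i : Fin k, |((B.orderEmbOfFin hB i : Fin n) : ℤ)
      - ((A.orderEmbOfFin hA i : Fin n) : ℤ)| := by
  classical
  have step1 : ∀ i : Fin k, |((B.orderEmbOfFin hB i : Fin n) : ℤ)
      - ((A.orderEmbOfFin hA i : Fin n) : ℤ)|
      = ∑ t ∈ Finset.range n,
          |(if ((B.orderEmbOfFin hB i : Fin n) : ℕ) ≤ t then (1 : ℤ) else 0)
            - (if ((A.orderEmbOfFin hA i : Fin n) : ℕ) ≤ t then 1 else 0)| := by
    intro i
    rw [sum_ind_le n _ _ (le_of_lt (B.orderEmbOfFin hB i).isLt)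
      (le_of_lt (A.orderEmbOfFin hA i).isLt)]
  rw [Finset.sum_congr rfl (fun i _ => step1 i), Finset.sum_comm]
  unfold phi
  apply Finset.sum_congr rfl
  intro t _
  have step2 : ∀ i : Fin k,
      |(if ((B.orderEmbOfFin hB i : Fin n) : ℕ) ≤ t then (1 : ℤ) else 0)
        - (if ((A.orderEmbOfFin hA i : Fin n) : ℕ) ≤ t then 1 else 0)|
      = |(if (i : ℕ) < (B.filter (fun x : Fin n => (x : ℕ) ≤ t)).card then (1 : ℤ) else 0)
        - (if (i : ℕ) < (A.filter (fun x : Fin n => (x : ℕ) ≤ t)).card then 1 else 0)| := by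
    intro i
    rw [if_congr (sorted_le_iff B hB i t) rfl rfl, if_congr (sorted_le_iff A hA i t) rfl rfl]
  rw [Finset.sum_congr rfl (fun i _ => step2 i)]
  rw [Fin.sum_univ_eq_sum_range (fun j =>
    |(if j < (B.filter (fun x : Fin n => (x : ℕ) ≤ t)).card then (1 : ℤ) else 0)
      - (if j < (A.filter (fun x : Fin n => (x : ℕ) ≤ t)).card then 1 else 0)|)]
  have hBk : (B.filter (fun x : Fin n => (x : ℕ) ≤ t)).card ≤ k :=
    le_trans (card_le_card (filter_subset _ _)) (le_of_eq hB)
  have hAk : (A.filter (fun x : Fin n => (x : ℕ) ≤ t)).card ≤ k :=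
    le_trans (card_le_card (filter_subset _ _)) (le_of_eq hA)
  rw [sum_ind_lt k _ _ hBk hAk]
  unfold cnt
  rw [abs_sub_comm]

end Stmt17Aux

open SimpleGraph in
/-- Distance formula in `F_k(P_n)`: if `u = {u_1 < … < u_k}` and `v = {v_1 < … < v_k}`
are vertices of `F_k(P_n)` (listed in increasing order via `Finset.orderEmbOfFin`), then
`dist(u, v) = ∑_i |v_i - u_i|`. -/
theorem stmt_17 (n k : ℕ) (hn : 2 ≤ n) (hk1 : 1 ≤ k) (hk2 : k ≤ n - 1)
    (u v : {s : Finset (Fin n) // s.card = k}) :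
    ((tokenGraph (pathGraph n) k).dist u v : ℤ) =
      ∑ i : Fin k, |((v.val.orderEmbOfFin v.prop i : ℕ) : ℤ) -
        ((u.val.orderEmbOfFin u.prop i : ℕ) : ℤ)| := by
  rw [Stmt17Aux.dist_eq u v, Stmt17Aux.phi_eq_sum u.val v.val u.2 v.2]
end
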